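/- arXiv:2008.02823 — 7 statements merged into one kernel-verified Lean document; each statement's English description precedes it below -/
import Mathlib

section
/- For all α ∈ (0,1) and all interval partitions β₁, β₂, γ₁, γ₂ ∈ I_α with α-diversity, the α-diversity metric satisfies both inequalities |d_α(β₂, γ₂) − d_α(β₁, γ₁)| ≤ d_α(β₁ ⋆ β₂, γ₁ ⋆ γ₂) ≤ d_α(β₁, γ₁) + d_α(β₂, γ₂), where ⋆ denotes concatenation of interval partitions. -/
open MeasureTheory Filter Topology Set

/-- `β` is an interval partition of `[0, M]`: a collection of disjoint open
subintervals of `[0, M]` (encoded by their endpoint pairs) whose union has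
full Lebesgue measure in `[0, M]`. -/
def IsIntervalPartition (M : ℝ) (β : Set (ℝ × ℝ)) : Prop :=
  0 ≤ M ∧ (∀ p ∈ β, 0 ≤ p.1 ∧ p.1 < p.2 ∧ p.2 ≤ M) ∧
    β.PairwiseDisjoint (fun p => Set.Ioo p.1 p.2) ∧
    volume (Set.Icc (0 : ℝ) M \ ⋃ p ∈ β, Set.Ioo p.1 p.2) = 0

/-- The `α`-diversity of `β` at `t`:
`Γ(1-α) · lim_{h ↓ 0} h^α · #{(a,b) ∈ β : b - a > h, b ≤ t}` (via `limUnder`). -/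
noncomputable def diversity (α : ℝ) (β : Set (ℝ × ℝ)) (t : ℝ) : ℝ :=
  limUnder (𝓝[>] (0 : ℝ))
    (fun h => Real.Gamma (1 - α) * h ^ α *
      ({p ∈ β | h < p.2 - p.1 ∧ p.2 ≤ t}.ncard : ℝ))

/-- `β` has the `α`-diversity property: the defining limit exists at every `t ∈ [0, M]`. -/
def HasDiversity (α M : ℝ) (β : Set (ℝ × ℝ)) : Prop :=
  ∀ t ∈ Set.Icc (0 : ℝ) M, ∃ D : ℝ,
    Tendsto (fun h => Real.Gamma (1 - α) * h ^ α *
        ({p ∈ β | h < p.2 - p.1 ∧ p.2 ≤ t}.ncard : ℝ))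
      (𝓝[>] (0 : ℝ)) (𝓝 D)

/-- A strictly increasing (in the left-to-right order) finite sequence of blocks. -/
def BlocksStrictMono {n : ℕ} (U : Fin n → ℝ × ℝ) : Prop :=
  ∀ i j : Fin n, i < j → (U i).2 ≤ (U j).1

/-- The `α`-distortion of a correspondence `(U_j, V_j)_{j ∈ [n]}` from `β` (an interval
partition of `[0, Mβ]`) to `γ` (an interval partition of `[0, Mγ]`): the maximum of the
four quantities (i)-(iv). -/
noncomputable def distortion (α Mβ Mγ : ℝ) (β γ : Set (ℝ × ℝ)) {n : ℕ}
    (U V : Fin n → ℝ × ℝ) : ℝ :=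
  max
    (max
      ((∑ j, |((U j).2 - (U j).1) - ((V j).2 - (V j).1)|) + Mβ - ∑ j, ((U j).2 - (U j).1))
      ((∑ j, |((U j).2 - (U j).1) - ((V j).2 - (V j).1)|) + Mγ - ∑ j, ((V j).2 - (V j).1)))
    (max
      (⨆ j : Fin n, |diversity α β (U j).1 - diversity α γ (V j).1|)
      |diversity α β Mβ - diversity α γ Mγ|)

/-- The distance `d_α`: the infimum of the `α`-distortion over all correspondences. -/
noncomputable def dAlpha (α Mβ Mγ : ℝ) (β γ : Set (ℝ × ℝ)) : ℝ :=
  sInf {d : ℝ | ∃ (n : ℕ) (U V : Fin n → ℝ × ℝ),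
    (∀ j, U j ∈ β) ∧ (∀ j, V j ∈ γ) ∧ BlocksStrictMono U ∧ BlocksStrictMono V ∧
    d = distortion α Mβ Mγ β γ U V}

/-- The concatenation `β ⋆ γ`, where `β` is an interval partition of `[0, M]`:
the blocks of `β` together with the blocks of `γ` translated by `M`. -/
def ipConcat (M : ℝ) (β γ : Set (ℝ × ℝ)) : Set (ℝ × ℝ) :=
  β ∪ (fun p : ℝ × ℝ => (p.1 + M, p.2 + M)) '' γ

/-!
Gluing a correspondence between `β₁, γ₁` and one between `β₂, γ₂` side by side gives a
correspondence between `β₁ ⋆ β₂` and `γ₁ ⋆ γ₂` whose distortion is at most the sum of the two,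
because the diversity is additive across the junction:
`𝒟_{β₁ ⋆ β₂}(‖β₁‖ + s) = 𝒟_{β₁}(∞) + 𝒟_{β₂}(s)`.

Conversely, a correspondence between `β₁ ⋆ β₂` and `γ₁ ⋆ γ₂` restricts to one between `β₁` and
`γ₁` by keeping the pairs that match a block of `β₁` with a block of `γ₁`. Correspondences
preserve order, so the discarded pairs all lie on the `β₂`-side or all on the `γ₂`-side, and the
smaller of their masses sums to at most `‖β₂‖` or `‖γ₂‖`. The resulting loss in the mass terms
and in the diversities is absorbed by the distortion of any correspondence between `β₂` and
`γ₂`, which is at least `|‖β₂‖ - ‖γ₂‖|` and `|𝒟_{β₂}(∞) - 𝒟_{γ₂}(∞)|`. The same argument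
restricts to `β₂, γ₂`.
-/

def shiftBlock (c : ℝ) (p : ℝ × ℝ) : ℝ × ℝ := (p.1 + c, p.2 + c)

@[simp] lemma shiftBlock_fst (c : ℝ) (p : ℝ × ℝ) : (shiftBlock c p).1 = p.1 + c := rfl

@[simp] lemma shiftBlock_snd (c : ℝ) (p : ℝ × ℝ) : (shiftBlock c p).2 = p.2 + c := rfl

@[simp] lemma shiftBlock_zero (p : ℝ × ℝ) : shiftBlock 0 p = p := by simp [shiftBlock]

@[simp] lemma shiftBlock_neg_shiftBlock (c : ℝ) (p : ℝ × ℝ) :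
    shiftBlock (-c) (shiftBlock c p) = p := by
  simp [shiftBlock]

lemma shiftBlock_injective (c : ℝ) : Function.Injective (shiftBlock c) := fun p q hpq => by
  simpa using congrArg (shiftBlock (-c)) hpq

lemma mem_ipConcat {M : ℝ} {β γ : Set (ℝ × ℝ)} {p : ℝ × ℝ} :
    p ∈ ipConcat M β γ ↔ p ∈ β ∨ ∃ q ∈ γ, shiftBlock M q = p :=
  Iff.rfl

def longBlocks (β : Set (ℝ × ℝ)) (h t : ℝ) : Set (ℝ × ℝ) :=
  {p ∈ β | h < p.2 - p.1 ∧ p.2 ≤ t}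

lemma diversity_eq_limUnder (α : ℝ) (β : Set (ℝ × ℝ)) (t : ℝ) :
    diversity α β t = limUnder (𝓝[>] (0 : ℝ))
      (fun h => Real.Gamma (1 - α) * h ^ α * ((longBlocks β h t).ncard : ℝ)) :=
  rfl

lemma HasDiversity.tendsto {α M : ℝ} {β : Set (ℝ × ℝ)} (hd : HasDiversity α M β) {t : ℝ}
    (ht : t ∈ Icc 0 M) :
    Tendsto (fun h => Real.Gamma (1 - α) * h ^ α * ((longBlocks β h t).ncard : ℝ))
      (𝓝[>] (0 : ℝ)) (𝓝 (diversity α β t)) := by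
  obtain ⟨D, hD⟩ := hd t ht
  rwa [diversity, hD.limUnder_eq]

lemma abs_add_sub_add_le (a b c d : ℝ) : |a + c - (b + d)| ≤ |a - b| + |c - d| := by
  rw [add_sub_add_comm]
  exact abs_add_le _ _

lemma abs_sub_le_abs_add_sub_add_add (a b c d : ℝ) : |a - b| ≤ |a + c - (b + d)| + |c - d| := by
  have := abs_sub (a + c - (b + d)) (c - d)
  rwa [show a + c - (b + d) - (c - d) = a - b by ring] at this

lemma sub_abs_sub_le_min (a b : ℝ) : a - |a - b| ≤ min a b :=
  le_min (by linarith [abs_nonneg (a - b)]) (by linarith [le_abs_self (a - b)])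

lemma sum_comp_orderEmbOfFin {ι M : Type*} [LinearOrder ι] [AddCommMonoid M] (s : Finset ι)
    (f : ι → M) : ∑ k, f (s.orderEmbOfFin rfl k) = ∑ j ∈ s, f j := by
  conv_rhs => rw [← s.map_orderEmbOfFin_univ rfl, Finset.sum_map]
  rfl

lemma sum_abs_sub_add_sub_sum_le {ι : Type*} [Fintype ι] [DecidableEq ι] (s : Finset ι)
    (a b : ι → ℝ) {C D : ℝ} (h : ∑ j ∈ sᶜ, min (a j) (b j) ≤ D - C) :
    ∑ j ∈ s, |a j - b j| + C - ∑ j ∈ s, a j ≤ ∑ j, |a j - b j| + D - ∑ j, a j := by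
  have hmin : ∑ j ∈ sᶜ, (a j - |a j - b j|) ≤ ∑ j ∈ sᶜ, min (a j) (b j) :=
    Finset.sum_le_sum fun j _ => sub_abs_sub_le_min (a j) (b j)
  rw [Finset.sum_sub_distrib] at hmin
  rw [← Finset.sum_add_sum_compl s a, ← Finset.sum_add_sum_compl s fun j => |a j - b j|]
  linarith

lemma sum_length_le_of_pairwiseDisjoint {ι : Type*} {t : Finset ι} {W : ι → ℝ × ℝ} {A B : ℝ}
    (hAB : A ≤ B) (hdisj : (t : Set ι).PairwiseDisjoint fun j => Ioo (W j).1 (W j).2)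
    (hW : ∀ j ∈ t, A ≤ (W j).1 ∧ (W j).1 ≤ (W j).2 ∧ (W j).2 ≤ B) :
    ∑ j ∈ t, ((W j).2 - (W j).1) ≤ B - A := by
  have hvol : ∑ j ∈ t, volume (Ioo (W j).1 (W j).2) ≤ volume (Icc A B) := by
    rw [← measure_biUnion_finset hdisj fun _ _ => measurableSet_Ioo]
    exact measure_mono <| iUnion₂_subset fun j hj =>
      Ioo_subset_Icc_self.trans (Icc_subset_Icc (hW j hj).1 (hW j hj).2.2)
  simp only [Real.volume_Ioo, Real.volume_Icc] at hvol
  rw [← ENNReal.ofReal_sum_of_nonneg fun j hj => sub_nonneg.2 (hW j hj).2.1] at hvol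
  exact (ENNReal.ofReal_le_ofReal_iff (sub_nonneg.2 hAB)).1 hvol

namespace IsIntervalPartition

variable {M : ℝ} {β : Set (ℝ × ℝ)}

lemma nonneg (hβ : IsIntervalPartition M β) : 0 ≤ M := hβ.1

lemma bounds (hβ : IsIntervalPartition M β) {p : ℝ × ℝ} (hp : p ∈ β) :
    0 ≤ p.1 ∧ p.1 < p.2 ∧ p.2 ≤ M :=
  hβ.2.1 p hp

lemma bounds_le (hβ : IsIntervalPartition M β) {p : ℝ × ℝ} (hp : p ∈ β) :
    0 ≤ p.1 ∧ p.1 ≤ p.2 ∧ p.2 ≤ M :=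
  (hβ.bounds hp).imp_right fun h => h.imp_left le_of_lt

/-- Needed to make the block counts additive: `Set.ncard` of an infinite set is `0`. -/
lemma finite_longBlocks (hβ : IsIntervalPartition M β) {h : ℝ} (hh : 0 < h) (t : ℝ) :
    (longBlocks β h t).Finite := by
  refine Set.Finite.subset (s := {p ∈ β | h < p.2 - p.1}) ?_ fun p hp => ⟨hp.1, hp.2.1⟩
  by_contra hinf
  obtain ⟨F, hFβ, hcard⟩ := Set.Infinite.exists_subset_card_eq hinf (⌊M / h⌋₊ + 1)
  have hsum : ∑ p ∈ F, (p.2 - p.1) ≤ M - 0 :=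
    sum_length_le_of_pairwiseDisjoint (W := fun p => p) hβ.nonneg
      (hβ.2.2.1.subset fun p hp => (hFβ hp).1)
      fun p hp => hβ.bounds_le (hFβ hp).1
  have hcount : F.card • h ≤ ∑ p ∈ F, (p.2 - p.1) :=
    Finset.card_nsmul_le_sum F _ h fun p hp => (hFβ hp).2.le
  rw [hcard, nsmul_eq_mul] at hcount
  have hfloor := Nat.lt_floor_add_one (M / h)
  rw [div_lt_iff₀ hh] at hfloor
  push_cast at hcount
  linarith

end IsIntervalPartition

namespace BlocksStrictMono

variable {n : ℕ} {W : Fin n → ℝ × ℝ}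

lemma comp (hW : BlocksStrictMono W) {m : ℕ} {f : Fin m → Fin n} (hf : StrictMono f) :
    BlocksStrictMono (W ∘ f) :=
  fun _ _ hij => hW _ _ (hf hij)

lemma shift (hW : BlocksStrictMono W) (c : ℝ) : BlocksStrictMono (shiftBlock c ∘ W) :=
  fun i j hij => by simpa using hW i j hij

lemma append (hW : BlocksStrictMono W) {m : ℕ} {W' : Fin m → ℝ × ℝ} (hW' : BlocksStrictMono W')
    (hsep : ∀ i j, (W i).2 ≤ (W' j).1) : BlocksStrictMono (Fin.append W W') := by
  intro i j hij
  cases i using Fin.addCases with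
  | left i =>
    cases j using Fin.addCases with
    | left j => simpa using hW i j (Fin.castSucc_lt_castSucc_iff.1 hij)
    | right j => simpa using hsep i j
  | right i =>
    cases j using Fin.addCases with
    | left j => simp [Fin.lt_def] at hij; omega
    | right j => simpa using hW' i j ((Fin.natAdd_lt_natAdd_iff n).1 hij)

lemma pairwiseDisjoint (hW : BlocksStrictMono W) (t : Set (Fin n)) :
    t.PairwiseDisjoint fun j => Ioo (W j).1 (W j).2 := by
  have hlt : ∀ i j, i < j → Disjoint (Ioo (W i).1 (W i).2) (Ioo (W j).1 (W j).2) :=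
    fun i j hij => Ioo_disjoint_Ioo.2 <|
      (min_le_left _ _).trans ((hW i j hij).trans (le_max_right _ _))
  intro i _ j _ hij
  rcases hij.lt_or_gt with hij | hij
  · exact hlt i j hij
  · exact (hlt j i hij).symm

lemma sum_length_le (hW : BlocksStrictMono W) {t : Finset (Fin n)} {A B : ℝ} (hAB : A ≤ B)
    (hbounds : ∀ j ∈ t, A ≤ (W j).1 ∧ (W j).1 ≤ (W j).2 ∧ (W j).2 ≤ B) :
    ∑ j ∈ t, ((W j).2 - (W j).1) ≤ B - A :=
  sum_length_le_of_pairwiseDisjoint hAB (hW.pairwiseDisjoint _) hbounds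

lemma not_crossing (hW : BlocksStrictMono W) {X : Fin n → ℝ × ℝ} (hX : BlocksStrictMono X)
    (hWlt : ∀ j, (W j).1 < (W j).2) (hXlt : ∀ j, (X j).1 < (X j).2) {M N : ℝ} {i j : Fin n}
    (hWi : (W i).2 ≤ M) (hXi : N < (X i).2) (hWj : M < (W j).2) (hXj : (X j).2 ≤ N) : False := by
  rcases lt_trichotomy i j with hij | rfl | hij
  · linarith [hX i j hij, hXlt j]
  · linarith
  · linarith [hW j i hij, hWlt i]

end BlocksStrictMono

structure IsCorrespondence (β γ : Set (ℝ × ℝ)) {n : ℕ} (U V : Fin n → ℝ × ℝ) : Prop where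
  mem_left : ∀ j, U j ∈ β
  mem_right : ∀ j, V j ∈ γ
  mono_left : BlocksStrictMono U
  mono_right : BlocksStrictMono V

section Distortion

variable {α Mβ Mγ : ℝ} {β γ : Set (ℝ × ℝ)} {n : ℕ} {U V : Fin n → ℝ × ℝ}

lemma mass_left_le_distortion :
    (∑ j, |((U j).2 - (U j).1) - ((V j).2 - (V j).1)|) + Mβ - ∑ j, ((U j).2 - (U j).1) ≤
      distortion α Mβ Mγ β γ U V :=
  (le_max_left _ _).trans (le_max_left _ _)

lemma mass_right_le_distortion :
    (∑ j, |((U j).2 - (U j).1) - ((V j).2 - (V j).1)|) + Mγ - ∑ j, ((V j).2 - (V j).1) ≤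
      distortion α Mβ Mγ β γ U V :=
  (le_max_right _ _).trans (le_max_left _ _)

lemma abs_diversity_sub_le_distortion (j : Fin n) :
    |diversity α β (U j).1 - diversity α γ (V j).1| ≤ distortion α Mβ Mγ β γ U V :=
  (le_ciSup (f := fun j => |diversity α β (U j).1 - diversity α γ (V j).1|)
    (Set.finite_range _).bddAbove j).trans ((le_max_left _ _).trans (le_max_right _ _))

lemma abs_diversity_end_le_distortion :
    |diversity α β Mβ - diversity α γ Mγ| ≤ distortion α Mβ Mγ β γ U V :=
  (le_max_right _ _).trans (le_max_right _ _)

lemma distortion_nonneg : 0 ≤ distortion α Mβ Mγ β γ U V :=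
  (abs_nonneg _).trans abs_diversity_end_le_distortion

lemma distortion_le {D : ℝ}
    (hβ : (∑ j, |((U j).2 - (U j).1) - ((V j).2 - (V j).1)|) + Mβ - ∑ j, ((U j).2 - (U j).1) ≤ D)
    (hγ : (∑ j, |((U j).2 - (U j).1) - ((V j).2 - (V j).1)|) + Mγ - ∑ j, ((V j).2 - (V j).1) ≤ D)
    (hdiv : ∀ j, |diversity α β (U j).1 - diversity α γ (V j).1| ≤ D)
    (hend : |diversity α β Mβ - diversity α γ Mγ| ≤ D) :
    distortion α Mβ Mγ β γ U V ≤ D :=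
  max_le (max_le hβ hγ) (max_le (Real.iSup_le hdiv ((abs_nonneg _).trans hend)) hend)

lemma IsCorrespondence.abs_sub_le_distortion (hβ : IsIntervalPartition Mβ β)
    (hγ : IsIntervalPartition Mγ γ) (hUV : IsCorrespondence β γ U V) :
    |Mβ - Mγ| ≤ distortion α Mβ Mγ β γ U V := by
  have hU : ∑ j, ((U j).2 - (U j).1) ≤ Mβ - 0 := hUV.mono_left.sum_length_le hβ.nonneg
    fun j _ => hβ.bounds_le (hUV.mem_left j)
  have hV : ∑ j, ((V j).2 - (V j).1) ≤ Mγ - 0 := hUV.mono_right.sum_length_le hγ.nonneg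
    fun j _ => hγ.bounds_le (hUV.mem_right j)
  have hd := Finset.abs_sum_le_sum_abs
    (fun j => ((U j).2 - (U j).1) - ((V j).2 - (V j).1)) Finset.univ
  rw [Finset.sum_sub_distrib] at hd
  have hβd : _ ≤ distortion α Mβ Mγ β γ U V := mass_left_le_distortion
  have hγd : _ ≤ distortion α Mβ Mγ β γ U V := mass_right_le_distortion
  rw [abs_sub_le_iff]
  constructor <;> linarith [abs_le.1 hd]

end Distortion

def distortions (α Mβ Mγ : ℝ) (β γ : Set (ℝ × ℝ)) : Set ℝ :=
  {d : ℝ | ∃ (n : ℕ) (U V : Fin n → ℝ × ℝ),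
    (∀ j, U j ∈ β) ∧ (∀ j, V j ∈ γ) ∧ BlocksStrictMono U ∧ BlocksStrictMono V ∧
    d = distortion α Mβ Mγ β γ U V}

section Distortions

variable {α Mβ Mγ : ℝ} {β γ : Set (ℝ × ℝ)}

lemma dAlpha_eq_sInf_distortions : dAlpha α Mβ Mγ β γ = sInf (distortions α Mβ Mγ β γ) := rfl

lemma IsCorrespondence.distortion_mem {n : ℕ} {U V : Fin n → ℝ × ℝ}
    (hUV : IsCorrespondence β γ U V) : distortion α Mβ Mγ β γ U V ∈ distortions α Mβ Mγ β γ :=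
  ⟨n, U, V, hUV.1, hUV.2, hUV.3, hUV.4, rfl⟩

lemma distortions_nonempty : (distortions α Mβ Mγ β γ).Nonempty :=
  ⟨_, IsCorrespondence.distortion_mem (U := finZeroElim) (V := finZeroElim)
    ⟨finZeroElim, finZeroElim, finZeroElim, finZeroElim⟩⟩

lemma bddBelow_distortions : BddBelow (distortions α Mβ Mγ β γ) :=
  ⟨0, by rintro _ ⟨_, _, _, _, _, _, _, rfl⟩; exact distortion_nonneg⟩

lemma dAlpha_le_distortion {n : ℕ} {U V : Fin n → ℝ × ℝ} (hUV : IsCorrespondence β γ U V) :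
    dAlpha α Mβ Mγ β γ ≤ distortion α Mβ Mγ β γ U V :=
  csInf_le bddBelow_distortions hUV.distortion_mem

lemma le_dAlpha_add_dAlpha {Mβ' Mγ' C : ℝ} {β' γ' : Set (ℝ × ℝ)}
    (h : ∀ (n : ℕ) (U V : Fin n → ℝ × ℝ), IsCorrespondence β γ U V →
      ∀ (m : ℕ) (U' V' : Fin m → ℝ × ℝ), IsCorrespondence β' γ' U' V' →
        C ≤ distortion α Mβ Mγ β γ U V + distortion α Mβ' Mγ' β' γ' U' V') :
    C ≤ dAlpha α Mβ Mγ β γ + dAlpha α Mβ' Mγ' β' γ' := by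
  rw [dAlpha_eq_sInf_distortions, dAlpha_eq_sInf_distortions, ← csInf_add distortions_nonempty
    bddBelow_distortions distortions_nonempty bddBelow_distortions]
  refine le_csInf (distortions_nonempty.add distortions_nonempty) ?_
  rintro _ ⟨_, ⟨n, U, V, hU, hV, hUm, hVm, rfl⟩, _, ⟨m, U', V', hU', hV', hUm', hVm', rfl⟩, rfl⟩
  exact h n U V ⟨hU, hV, hUm, hVm⟩ m U' V' ⟨hU', hV', hUm', hVm'⟩

/-- The bound is witnessed by the restriction of `(W, X)` to the pairs indexed by `s`, with the
blocks shifted by `c` and `d`; the hypotheses bound by `E` what each of the four terms loses. -/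
lemma dAlpha_le_distortion_add_of_restrict {M' N' c d E : ℝ} {β' γ' : Set (ℝ × ℝ)} {n : ℕ}
    {W X : Fin n → ℝ × ℝ} (hWm : BlocksStrictMono W) (hXm : BlocksStrictMono X)
    (s : Finset (Fin n)) (hWs : ∀ j ∈ s, shiftBlock c (W j) ∈ β')
    (hXs : ∀ j ∈ s, shiftBlock d (X j) ∈ γ')
    (hmassβ : ∑ j ∈ sᶜ, min ((W j).2 - (W j).1) ((X j).2 - (X j).1) ≤ Mβ + E - M')
    (hmassγ : ∑ j ∈ sᶜ, min ((W j).2 - (W j).1) ((X j).2 - (X j).1) ≤ Mγ + E - N')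
    (hdiv : ∀ j ∈ s, |diversity α β' ((W j).1 + c) - diversity α γ' ((X j).1 + d)| ≤
      |diversity α β (W j).1 - diversity α γ (X j).1| + E)
    (hend : |diversity α β' M' - diversity α γ' N'| ≤
      |diversity α β Mβ - diversity α γ Mγ| + E) :
    dAlpha α M' N' β' γ' ≤ distortion α Mβ Mγ β γ W X + E := by
  set e := s.orderEmbOfFin rfl
  have hcorr : IsCorrespondence β' γ' (shiftBlock c ∘ W ∘ e) (shiftBlock d ∘ X ∘ e) :=
    ⟨fun k => hWs _ (s.orderEmbOfFin_mem rfl k), fun k => hXs _ (s.orderEmbOfFin_mem rfl k),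
      (hWm.comp e.strictMono).shift c, (hXm.comp e.strictMono).shift d⟩
  refine (dAlpha_le_distortion hcorr).trans (distortion_le ?_ ?_ ?_ ?_)
  · have hβd : _ ≤ distortion α Mβ Mγ β γ W X := mass_left_le_distortion
    simp only [Function.comp_apply, shiftBlock_fst, shiftBlock_snd, add_sub_add_right_eq_sub]
    rw [sum_comp_orderEmbOfFin s (fun j => |((W j).2 - (W j).1) - ((X j).2 - (X j).1)|),
      sum_comp_orderEmbOfFin s (fun j => (W j).2 - (W j).1)]
    linarith [sum_abs_sub_add_sub_sum_le s _ _ hmassβ]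
  · have hγd : _ ≤ distortion α Mβ Mγ β γ W X := mass_right_le_distortion
    simp only [Function.comp_apply, shiftBlock_fst, shiftBlock_snd, add_sub_add_right_eq_sub]
    rw [sum_comp_orderEmbOfFin s (fun j => |((W j).2 - (W j).1) - ((X j).2 - (X j).1)|),
      sum_comp_orderEmbOfFin s (fun j => (X j).2 - (X j).1)]
    simp only [min_comm ((W _).2 - _)] at hmassγ
    have := sum_abs_sub_add_sub_sum_le s _ _ hmassγ
    simp only [abs_sub_comm ((X _).2 - _)] at this
    linarith
  · intro k
    exact (hdiv _ (s.orderEmbOfFin_mem rfl k)).trans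
      (add_le_add_left (abs_diversity_sub_le_distortion _) _)
  · exact hend.trans (add_le_add_left abs_diversity_end_le_distortion _)

end Distortions

section Concat

variable {α M₁ M₂ : ℝ} {β₁ β₂ : Set (ℝ × ℝ)} {p : ℝ × ℝ}

lemma mem_of_mem_ipConcat_of_snd_le (hβ₂ : IsIntervalPartition M₂ β₂)
    (hp : p ∈ ipConcat M₁ β₁ β₂) (hle : p.2 ≤ M₁) : p ∈ β₁ := by
  rcases mem_ipConcat.1 hp with hp | ⟨q, hq, rfl⟩
  · exact hp
  · have := hβ₂.bounds hq
    simp only [shiftBlock_snd] at hle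
    linarith

lemma shiftBlock_neg_mem_of_mem_ipConcat_of_lt_snd (hβ₁ : IsIntervalPartition M₁ β₁)
    (hp : p ∈ ipConcat M₁ β₁ β₂) (hlt : M₁ < p.2) : shiftBlock (-M₁) p ∈ β₂ := by
  rcases mem_ipConcat.1 hp with hp | ⟨q, hq, rfl⟩
  · exact absurd (hβ₁.bounds hp).2.2 hlt.not_ge
  · rwa [shiftBlock_neg_shiftBlock]

lemma fst_lt_snd_of_mem_ipConcat (hβ₁ : IsIntervalPartition M₁ β₁)
    (hβ₂ : IsIntervalPartition M₂ β₂) (hp : p ∈ ipConcat M₁ β₁ β₂) : p.1 < p.2 := by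
  rcases mem_ipConcat.1 hp with hp | ⟨q, hq, rfl⟩
  · exact (hβ₁.bounds hp).2.1
  · simpa using (hβ₂.bounds hq).2.1

lemma IsCorrespondence.not_crossing_ipConcat {N₁ N₂ : ℝ} {γ₁ γ₂ : Set (ℝ × ℝ)}
    (hβ₁ : IsIntervalPartition M₁ β₁) (hβ₂ : IsIntervalPartition M₂ β₂)
    (hγ₁ : IsIntervalPartition N₁ γ₁) (hγ₂ : IsIntervalPartition N₂ γ₂) {n : ℕ}
    {W X : Fin n → ℝ × ℝ} (hWX : IsCorrespondence (ipConcat M₁ β₁ β₂) (ipConcat N₁ γ₁ γ₂) W X)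
    {i j : Fin n} (hWi : (W i).2 ≤ M₁) (hXi : N₁ < (X i).2) (hWj : M₁ < (W j).2)
    (hXj : (X j).2 ≤ N₁) : False :=
  hWX.mono_left.not_crossing hWX.mono_right
    (fun k => fst_lt_snd_of_mem_ipConcat hβ₁ hβ₂ (hWX.mem_left k))
    (fun k => fst_lt_snd_of_mem_ipConcat hγ₁ hγ₂ (hWX.mem_right k)) hWi hXi hWj hXj

lemma longBlocks_ipConcat_of_le (hβ₂ : IsIntervalPartition M₂ β₂) {t : ℝ} (ht : t ≤ M₁)
    (h : ℝ) : longBlocks (ipConcat M₁ β₁ β₂) h t = longBlocks β₁ h t := by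
  ext p
  refine ⟨fun ⟨hp, hpt⟩ => ⟨mem_of_mem_ipConcat_of_snd_le hβ₂ hp (hpt.2.trans ht), hpt⟩,
    fun ⟨hp, hpt⟩ => ⟨Or.inl hp, hpt⟩⟩

lemma longBlocks_ipConcat_add (hβ₁ : IsIntervalPartition M₁ β₁) {s : ℝ} (hs : 0 ≤ s) (h : ℝ) :
    longBlocks (ipConcat M₁ β₁ β₂) h (M₁ + s) =
      longBlocks β₁ h M₁ ∪ shiftBlock M₁ '' longBlocks β₂ h s := by
  ext p
  simp only [longBlocks, mem_ipConcat, mem_union, mem_sep_iff, mem_image]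
  constructor
  · rintro ⟨hp | ⟨q, hq, rfl⟩, hlen, hle⟩
    · exact Or.inl ⟨hp, hlen, (hβ₁.bounds hp).2.2⟩
    · refine Or.inr ⟨q, ⟨hq, ?_, ?_⟩, rfl⟩ <;> simp only [shiftBlock_fst, shiftBlock_snd] at * <;>
        linarith
  · rintro (⟨hp, hlen, hle⟩ | ⟨q, ⟨hq, hlen, hle⟩, rfl⟩)
    · exact ⟨Or.inl hp, hlen, by linarith⟩
    · refine ⟨Or.inr ⟨q, hq, rfl⟩, ?_, ?_⟩ <;> simp only [shiftBlock_fst, shiftBlock_snd] <;>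
        linarith

lemma ncard_longBlocks_ipConcat_add (hβ₁ : IsIntervalPartition M₁ β₁)
    (hβ₂ : IsIntervalPartition M₂ β₂) {s h : ℝ} (hs : 0 ≤ s) (hh : 0 < h) :
    (longBlocks (ipConcat M₁ β₁ β₂) h (M₁ + s)).ncard =
      (longBlocks β₁ h M₁).ncard + (longBlocks β₂ h s).ncard := by
  have hdisj : Disjoint (longBlocks β₁ h M₁) (shiftBlock M₁ '' longBlocks β₂ h s) := by
    rw [Set.disjoint_left]
    rintro _ ⟨_, _, hle⟩ ⟨q, ⟨hq, _, _⟩, rfl⟩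
    have := hβ₂.bounds hq
    simp only [shiftBlock_snd] at hle
    linarith
  rw [longBlocks_ipConcat_add hβ₁ hs, ncard_union_eq hdisj (hβ₁.finite_longBlocks hh _)
    ((hβ₂.finite_longBlocks hh _).image _), ncard_image_of_injective _ (shiftBlock_injective _)]

lemma diversity_ipConcat_of_le (hβ₂ : IsIntervalPartition M₂ β₂) {t : ℝ} (ht : t ≤ M₁) :
    diversity α (ipConcat M₁ β₁ β₂) t = diversity α β₁ t := by
  simp only [diversity_eq_limUnder, longBlocks_ipConcat_of_le hβ₂ ht]

lemma diversity_ipConcat_add (hβ₁ : IsIntervalPartition M₁ β₁)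
    (hβ₂ : IsIntervalPartition M₂ β₂) (hd₁ : HasDiversity α M₁ β₁)
    (hd₂ : HasDiversity α M₂ β₂) {s : ℝ} (hs : s ∈ Icc 0 M₂) :
    diversity α (ipConcat M₁ β₁ β₂) (M₁ + s) = diversity α β₁ M₁ + diversity α β₂ s := by
  rw [diversity_eq_limUnder]
  refine (((hd₁.tendsto ⟨hβ₁.nonneg, le_rfl⟩).add (hd₂.tendsto hs)).congr' ?_).limUnder_eq
  filter_upwards [self_mem_nhdsWithin] with h hh
  rw [ncard_longBlocks_ipConcat_add hβ₁ hβ₂ hs.1 hh]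
  push_cast
  ring

lemma diversity_ipConcat_of_lt_snd (hβ₁ : IsIntervalPartition M₁ β₁)
    (hβ₂ : IsIntervalPartition M₂ β₂) (hd₁ : HasDiversity α M₁ β₁)
    (hd₂ : HasDiversity α M₂ β₂) (hp : p ∈ ipConcat M₁ β₁ β₂) (hlt : M₁ < p.2) :
    diversity α (ipConcat M₁ β₁ β₂) p.1 = diversity α β₁ M₁ + diversity α β₂ (p.1 + -M₁) := by
  have hq := hβ₂.bounds (shiftBlock_neg_mem_of_mem_ipConcat_of_lt_snd hβ₁ hp hlt)
  simp only [shiftBlock_fst, shiftBlock_snd] at hq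
  simpa using diversity_ipConcat_add hβ₁ hβ₂ hd₁ hd₂ ⟨hq.1, by linarith⟩

lemma sum_length_le_of_forall_snd_le (hβ₁ : IsIntervalPartition M₁ β₁)
    (hβ₂ : IsIntervalPartition M₂ β₂) {n : ℕ} {W : Fin n → ℝ × ℝ}
    (hW : ∀ j, W j ∈ ipConcat M₁ β₁ β₂) (hWm : BlocksStrictMono W) {t : Finset (Fin n)}
    (ht : ∀ j ∈ t, (W j).2 ≤ M₁) : ∑ j ∈ t, ((W j).2 - (W j).1) ≤ M₁ := by
  simpa using hWm.sum_length_le hβ₁.nonneg fun j hj =>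
    hβ₁.bounds_le (mem_of_mem_ipConcat_of_snd_le hβ₂ (hW j) (ht j hj))

lemma sum_length_le_of_forall_lt_snd (hβ₁ : IsIntervalPartition M₁ β₁)
    (hβ₂ : IsIntervalPartition M₂ β₂) {n : ℕ} {W : Fin n → ℝ × ℝ}
    (hW : ∀ j, W j ∈ ipConcat M₁ β₁ β₂) (hWm : BlocksStrictMono W) {t : Finset (Fin n)}
    (ht : ∀ j ∈ t, M₁ < (W j).2) : ∑ j ∈ t, ((W j).2 - (W j).1) ≤ M₂ := by
  have hbounds : ∀ j ∈ t, M₁ ≤ (W j).1 ∧ (W j).1 ≤ (W j).2 ∧ (W j).2 ≤ M₁ + M₂ := fun j hj => by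
    have := hβ₂.bounds (shiftBlock_neg_mem_of_mem_ipConcat_of_lt_snd hβ₁ (hW j) (ht j hj))
    simp only [shiftBlock_fst, shiftBlock_snd] at this
    exact ⟨by linarith, by linarith, by linarith⟩
  simpa using hWm.sum_length_le (by linarith [hβ₂.nonneg]) hbounds

end Concat

section Bounds

variable {α M₁ M₂ N₁ N₂ : ℝ} {β₁ β₂ γ₁ γ₂ : Set (ℝ × ℝ)}

lemma IsCorrespondence.append (hβ₁ : IsIntervalPartition M₁ β₁)
    (hβ₂ : IsIntervalPartition M₂ β₂) (hγ₁ : IsIntervalPartition N₁ γ₁)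
    (hγ₂ : IsIntervalPartition N₂ γ₂) {n₁ n₂ : ℕ} {U₁ V₁ : Fin n₁ → ℝ × ℝ}
    {U₂ V₂ : Fin n₂ → ℝ × ℝ} (h₁ : IsCorrespondence β₁ γ₁ U₁ V₁)
    (h₂ : IsCorrespondence β₂ γ₂ U₂ V₂) :
    IsCorrespondence (ipConcat M₁ β₁ β₂) (ipConcat N₁ γ₁ γ₂)
      (Fin.append U₁ (shiftBlock M₁ ∘ U₂)) (Fin.append V₁ (shiftBlock N₁ ∘ V₂)) where
  mem_left i := by
    cases i using Fin.addCases with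
    | left i => simpa using mem_ipConcat.2 (Or.inl (h₁.mem_left i))
    | right i => simpa using mem_ipConcat.2 (Or.inr ⟨U₂ i, h₂.mem_left i, rfl⟩)
  mem_right i := by
    cases i using Fin.addCases with
    | left i => simpa using mem_ipConcat.2 (Or.inl (h₁.mem_right i))
    | right i => simpa using mem_ipConcat.2 (Or.inr ⟨V₂ i, h₂.mem_right i, rfl⟩)
  mono_left := h₁.mono_left.append (h₂.mono_left.shift M₁) fun i j => by
    simpa using (hβ₁.bounds (h₁.mem_left i)).2.2.trans
      (le_add_of_nonneg_left (hβ₂.bounds (h₂.mem_left j)).1)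
  mono_right := h₁.mono_right.append (h₂.mono_right.shift N₁) fun i j => by
    simpa using (hγ₁.bounds (h₁.mem_right i)).2.2.trans
      (le_add_of_nonneg_left (hγ₂.bounds (h₂.mem_right j)).1)

lemma abs_diversity_ipConcat_add_sub_le (hβ₁ : IsIntervalPartition M₁ β₁)
    (hβ₂ : IsIntervalPartition M₂ β₂) (hγ₁ : IsIntervalPartition N₁ γ₁)
    (hγ₂ : IsIntervalPartition N₂ γ₂) (hdβ₁ : HasDiversity α M₁ β₁)
    (hdβ₂ : HasDiversity α M₂ β₂) (hdγ₁ : HasDiversity α N₁ γ₁) (hdγ₂ : HasDiversity α N₂ γ₂)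
    {s t : ℝ} (hs : s ∈ Icc 0 M₂) (ht : t ∈ Icc 0 N₂) :
    |diversity α (ipConcat M₁ β₁ β₂) (M₁ + s) - diversity α (ipConcat N₁ γ₁ γ₂) (N₁ + t)| ≤
      |diversity α β₁ M₁ - diversity α γ₁ N₁| + |diversity α β₂ s - diversity α γ₂ t| := by
  rw [diversity_ipConcat_add hβ₁ hβ₂ hdβ₁ hdβ₂ hs, diversity_ipConcat_add hγ₁ hγ₂ hdγ₁ hdγ₂ ht]
  exact abs_add_sub_add_le _ _ _ _

lemma dAlpha_ipConcat_le_distortion_add (hβ₁ : IsIntervalPartition M₁ β₁)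
    (hβ₂ : IsIntervalPartition M₂ β₂) (hγ₁ : IsIntervalPartition N₁ γ₁)
    (hγ₂ : IsIntervalPartition N₂ γ₂) (hdβ₁ : HasDiversity α M₁ β₁)
    (hdβ₂ : HasDiversity α M₂ β₂) (hdγ₁ : HasDiversity α N₁ γ₁) (hdγ₂ : HasDiversity α N₂ γ₂)
    {n₁ n₂ : ℕ} {U₁ V₁ : Fin n₁ → ℝ × ℝ} {U₂ V₂ : Fin n₂ → ℝ × ℝ}
    (h₁ : IsCorrespondence β₁ γ₁ U₁ V₁) (h₂ : IsCorrespondence β₂ γ₂ U₂ V₂) :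
    dAlpha α (M₁ + M₂) (N₁ + N₂) (ipConcat M₁ β₁ β₂) (ipConcat N₁ γ₁ γ₂) ≤
      distortion α M₁ N₁ β₁ γ₁ U₁ V₁ + distortion α M₂ N₂ β₂ γ₂ U₂ V₂ := by
  set y := distortion α M₁ N₁ β₁ γ₁ U₁ V₁
  set z := distortion α M₂ N₂ β₂ γ₂ U₂ V₂
  refine (dAlpha_le_distortion (h₁.append hβ₁ hβ₂ hγ₁ hγ₂ h₂)).trans (distortion_le ?_ ?_ ?_ ?_)
  · have hy : _ ≤ y := mass_left_le_distortion
    have hz : _ ≤ z := mass_left_le_distortion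
    simp only [Fin.sum_univ_add, Fin.append_left, Fin.append_right, Function.comp_apply,
      shiftBlock_fst, shiftBlock_snd, add_sub_add_right_eq_sub]
    linarith
  · have hy : _ ≤ y := mass_right_le_distortion
    have hz : _ ≤ z := mass_right_le_distortion
    simp only [Fin.sum_univ_add, Fin.append_left, Fin.append_right, Function.comp_apply,
      shiftBlock_fst, shiftBlock_snd, add_sub_add_right_eq_sub]
    linarith
  · intro i
    cases i using Fin.addCases with
    | left i =>
      have hU := hβ₁.bounds (h₁.mem_left i)
      have hV := hγ₁.bounds (h₁.mem_right i)
      have hy : _ ≤ y := abs_diversity_sub_le_distortion i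
      simp only [Fin.append_left]
      rw [diversity_ipConcat_of_le hβ₂ (by linarith), diversity_ipConcat_of_le hγ₂ (by linarith)]
      linarith [(distortion_nonneg : 0 ≤ z)]
    | right i =>
      have hU := hβ₂.bounds (h₂.mem_left i)
      have hV := hγ₂.bounds (h₂.mem_right i)
      simp only [Fin.append_right, Function.comp_apply, shiftBlock_fst, add_comm _ M₁,
        add_comm _ N₁]
      exact (abs_diversity_ipConcat_add_sub_le hβ₁ hβ₂ hγ₁ hγ₂ hdβ₁ hdβ₂ hdγ₁ hdγ₂
        ⟨hU.1, by linarith⟩ ⟨hV.1, by linarith⟩).trans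
        (add_le_add abs_diversity_end_le_distortion (abs_diversity_sub_le_distortion i))
  · exact (abs_diversity_ipConcat_add_sub_le hβ₁ hβ₂ hγ₁ hγ₂ hdβ₁ hdβ₂ hdγ₁ hdγ₂
      ⟨hβ₂.nonneg, le_rfl⟩ ⟨hγ₂.nonneg, le_rfl⟩).trans
      (add_le_add abs_diversity_end_le_distortion abs_diversity_end_le_distortion)

lemma IsCorrespondence.sum_min_length_compl_left_le (hβ₁ : IsIntervalPartition M₁ β₁)
    (hβ₂ : IsIntervalPartition M₂ β₂) (hγ₁ : IsIntervalPartition N₁ γ₁)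
    (hγ₂ : IsIntervalPartition N₂ γ₂) {n : ℕ} {W X : Fin n → ℝ × ℝ}
    (hWX : IsCorrespondence (ipConcat M₁ β₁ β₂) (ipConcat N₁ γ₁ γ₂) W X) :
    let s := Finset.univ.filter fun j => (W j).2 ≤ M₁ ∧ (X j).2 ≤ N₁
    ∑ j ∈ sᶜ, min ((W j).2 - (W j).1) ((X j).2 - (X j).1) ≤ M₂ ∨
      ∑ j ∈ sᶜ, min ((W j).2 - (W j).1) ((X j).2 - (X j).1) ≤ N₂ := by
  intro s
  have hsc : ∀ j ∈ sᶜ, (W j).2 ≤ M₁ → N₁ < (X j).2 := fun j hj => by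
    simpa [s] using hj
  have hsplit : (∀ j ∈ sᶜ, M₁ < (W j).2) ∨ ∀ j ∈ sᶜ, N₁ < (X j).2 := by
    by_contra! ⟨⟨j, hjs, hj⟩, k, hks, hk⟩
    exact hWX.not_crossing_ipConcat hβ₁ hβ₂ hγ₁ hγ₂ hj (hsc j hjs hj)
      (lt_of_not_ge fun hk' => (hsc k hks hk').not_ge hk) hk
  exact hsplit.imp
    (fun h => (Finset.sum_le_sum fun _ _ => min_le_left _ _).trans
      (sum_length_le_of_forall_lt_snd hβ₁ hβ₂ hWX.mem_left hWX.mono_left h))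
    (fun h => (Finset.sum_le_sum fun _ _ => min_le_right _ _).trans
      (sum_length_le_of_forall_lt_snd hγ₁ hγ₂ hWX.mem_right hWX.mono_right h))

lemma dAlpha_left_le_distortion_add (hβ₁ : IsIntervalPartition M₁ β₁)
    (hβ₂ : IsIntervalPartition M₂ β₂) (hγ₁ : IsIntervalPartition N₁ γ₁)
    (hγ₂ : IsIntervalPartition N₂ γ₂) (hdβ₁ : HasDiversity α M₁ β₁)
    (hdβ₂ : HasDiversity α M₂ β₂) (hdγ₁ : HasDiversity α N₁ γ₁) (hdγ₂ : HasDiversity α N₂ γ₂)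
    {n m : ℕ} {W X : Fin n → ℝ × ℝ} {U V : Fin m → ℝ × ℝ}
    (hWX : IsCorrespondence (ipConcat M₁ β₁ β₂) (ipConcat N₁ γ₁ γ₂) W X)
    (hUV : IsCorrespondence β₂ γ₂ U V) :
    dAlpha α M₁ N₁ β₁ γ₁ ≤ distortion α (M₁ + M₂) (N₁ + N₂) (ipConcat M₁ β₁ β₂)
      (ipConcat N₁ γ₁ γ₂) W X + distortion α M₂ N₂ β₂ γ₂ U V := by
  set z := distortion α M₂ N₂ β₂ γ₂ U V
  have hz : 0 ≤ z := distortion_nonneg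
  have hz_mass : |M₂ - N₂| ≤ z := hUV.abs_sub_le_distortion hβ₂ hγ₂
  set s := Finset.univ.filter fun j => (W j).2 ≤ M₁ ∧ (X j).2 ≤ N₁
  have hmass := hWX.sum_min_length_compl_left_le hβ₁ hβ₂ hγ₁ hγ₂
  have hs : ∀ j ∈ s, (W j).2 ≤ M₁ ∧ (X j).2 ≤ N₁ := fun j hj => (Finset.mem_filter.1 hj).2
  refine dAlpha_le_distortion_add_of_restrict (c := 0) (d := 0) hWX.mono_left hWX.mono_right s
    (fun j hj => by simpa using mem_of_mem_ipConcat_of_snd_le hβ₂ (hWX.mem_left j) (hs j hj).1)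
    (fun j hj => by simpa using mem_of_mem_ipConcat_of_snd_le hγ₂ (hWX.mem_right j) (hs j hj).2)
    ?_ ?_ (fun j hj => ?_) ?_
  · rcases hmass with h | h <;> linarith [abs_le.1 hz_mass]
  · rcases hmass with h | h <;> linarith [abs_le.1 hz_mass]
  · have hW := fst_lt_snd_of_mem_ipConcat hβ₁ hβ₂ (hWX.mem_left j)
    have hX := fst_lt_snd_of_mem_ipConcat hγ₁ hγ₂ (hWX.mem_right j)
    rw [add_zero, add_zero, diversity_ipConcat_of_le hβ₂ (by linarith [(hs j hj).1]),
      diversity_ipConcat_of_le hγ₂ (by linarith [(hs j hj).2])]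
    linarith
  · rw [diversity_ipConcat_add hβ₁ hβ₂ hdβ₁ hdβ₂ ⟨hβ₂.nonneg, le_rfl⟩,
      diversity_ipConcat_add hγ₁ hγ₂ hdγ₁ hdγ₂ ⟨hγ₂.nonneg, le_rfl⟩]
    exact (abs_sub_le_abs_add_sub_add_add _ _ _ _).trans
      (add_le_add le_rfl abs_diversity_end_le_distortion)

lemma IsCorrespondence.sum_min_length_compl_right_le (hβ₁ : IsIntervalPartition M₁ β₁)
    (hβ₂ : IsIntervalPartition M₂ β₂) (hγ₁ : IsIntervalPartition N₁ γ₁)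
    (hγ₂ : IsIntervalPartition N₂ γ₂) {n : ℕ} {W X : Fin n → ℝ × ℝ}
    (hWX : IsCorrespondence (ipConcat M₁ β₁ β₂) (ipConcat N₁ γ₁ γ₂) W X) :
    let s := Finset.univ.filter fun j => M₁ < (W j).2 ∧ N₁ < (X j).2
    ∑ j ∈ sᶜ, min ((W j).2 - (W j).1) ((X j).2 - (X j).1) ≤ M₁ ∨
      ∑ j ∈ sᶜ, min ((W j).2 - (W j).1) ((X j).2 - (X j).1) ≤ N₁ := by
  intro s
  have hsc : ∀ j ∈ sᶜ, M₁ < (W j).2 → (X j).2 ≤ N₁ := fun j hj => by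
    simpa [s] using hj
  have hsplit : (∀ j ∈ sᶜ, (W j).2 ≤ M₁) ∨ ∀ j ∈ sᶜ, (X j).2 ≤ N₁ := by
    by_contra! ⟨⟨j, hjs, hj⟩, k, hks, hk⟩
    exact hWX.not_crossing_ipConcat hβ₁ hβ₂ hγ₁ hγ₂
      (le_of_not_gt fun hk' => (hsc k hks hk').not_gt hk) hk hj (hsc j hjs hj)
  exact hsplit.imp
    (fun h => (Finset.sum_le_sum fun _ _ => min_le_left _ _).trans
      (sum_length_le_of_forall_snd_le hβ₁ hβ₂ hWX.mem_left hWX.mono_left h))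
    (fun h => (Finset.sum_le_sum fun _ _ => min_le_right _ _).trans
      (sum_length_le_of_forall_snd_le hγ₁ hγ₂ hWX.mem_right hWX.mono_right h))

lemma dAlpha_right_le_distortion_add (hβ₁ : IsIntervalPartition M₁ β₁)
    (hβ₂ : IsIntervalPartition M₂ β₂) (hγ₁ : IsIntervalPartition N₁ γ₁)
    (hγ₂ : IsIntervalPartition N₂ γ₂) (hdβ₁ : HasDiversity α M₁ β₁)
    (hdβ₂ : HasDiversity α M₂ β₂) (hdγ₁ : HasDiversity α N₁ γ₁) (hdγ₂ : HasDiversity α N₂ γ₂)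
    {n m : ℕ} {W X : Fin n → ℝ × ℝ} {U V : Fin m → ℝ × ℝ}
    (hWX : IsCorrespondence (ipConcat M₁ β₁ β₂) (ipConcat N₁ γ₁ γ₂) W X)
    (hUV : IsCorrespondence β₁ γ₁ U V) :
    dAlpha α M₂ N₂ β₂ γ₂ ≤ distortion α (M₁ + M₂) (N₁ + N₂) (ipConcat M₁ β₁ β₂)
      (ipConcat N₁ γ₁ γ₂) W X + distortion α M₁ N₁ β₁ γ₁ U V := by
  set y := distortion α M₁ N₁ β₁ γ₁ U V
  have hy : 0 ≤ y := distortion_nonneg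
  have hy_mass : |M₁ - N₁| ≤ y := hUV.abs_sub_le_distortion hβ₁ hγ₁
  have hy_end : |diversity α β₁ M₁ - diversity α γ₁ N₁| ≤ y := abs_diversity_end_le_distortion
  set s := Finset.univ.filter fun j => M₁ < (W j).2 ∧ N₁ < (X j).2
  have hmass := hWX.sum_min_length_compl_right_le hβ₁ hβ₂ hγ₁ hγ₂
  have hs : ∀ j ∈ s, M₁ < (W j).2 ∧ N₁ < (X j).2 := fun j hj => (Finset.mem_filter.1 hj).2
  refine dAlpha_le_distortion_add_of_restrict (c := -M₁) (d := -N₁) hWX.mono_left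
    hWX.mono_right s
    (fun j hj => shiftBlock_neg_mem_of_mem_ipConcat_of_lt_snd hβ₁ (hWX.mem_left j) (hs j hj).1)
    (fun j hj => shiftBlock_neg_mem_of_mem_ipConcat_of_lt_snd hγ₁ (hWX.mem_right j) (hs j hj).2)
    ?_ ?_ (fun j hj => ?_) ?_
  · rcases hmass with h | h <;> linarith [abs_le.1 hy_mass]
  · rcases hmass with h | h <;> linarith [abs_le.1 hy_mass]
  · rw [diversity_ipConcat_of_lt_snd hβ₁ hβ₂ hdβ₁ hdβ₂ (hWX.mem_left j) (hs j hj).1,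
      diversity_ipConcat_of_lt_snd hγ₁ hγ₂ hdγ₁ hdγ₂ (hWX.mem_right j) (hs j hj).2,
      add_comm (diversity α β₁ M₁), add_comm (diversity α γ₁ N₁)]
    exact (abs_sub_le_abs_add_sub_add_add _ _ _ _).trans (add_le_add le_rfl hy_end)
  · rw [diversity_ipConcat_add hβ₁ hβ₂ hdβ₁ hdβ₂ ⟨hβ₂.nonneg, le_rfl⟩,
      diversity_ipConcat_add hγ₁ hγ₂ hdγ₁ hdγ₂ ⟨hγ₂.nonneg, le_rfl⟩,
      add_comm (diversity α β₁ M₁), add_comm (diversity α γ₁ N₁)]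
    exact (abs_sub_le_abs_add_sub_add_add _ _ _ _).trans (add_le_add le_rfl hy_end)

end Bounds

theorem dAlpha_concat_bound_general (α : ℝ)
    (M₁ M₂ N₁ N₂ : ℝ) (β₁ β₂ γ₁ γ₂ : Set (ℝ × ℝ))
    (hβ₁ : IsIntervalPartition M₁ β₁) (hβ₂ : IsIntervalPartition M₂ β₂)
    (hγ₁ : IsIntervalPartition N₁ γ₁) (hγ₂ : IsIntervalPartition N₂ γ₂)
    (hdβ₁ : HasDiversity α M₁ β₁) (hdβ₂ : HasDiversity α M₂ β₂)
    (hdγ₁ : HasDiversity α N₁ γ₁) (hdγ₂ : HasDiversity α N₂ γ₂) :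
    |dAlpha α M₂ N₂ β₂ γ₂ - dAlpha α M₁ N₁ β₁ γ₁| ≤
        dAlpha α (M₁ + M₂) (N₁ + N₂) (ipConcat M₁ β₁ β₂) (ipConcat N₁ γ₁ γ₂) ∧
      dAlpha α (M₁ + M₂) (N₁ + N₂) (ipConcat M₁ β₁ β₂) (ipConcat N₁ γ₁ γ₂) ≤
        dAlpha α M₁ N₁ β₁ γ₁ + dAlpha α M₂ N₂ β₂ γ₂ := by
  have hleft : dAlpha α M₁ N₁ β₁ γ₁ ≤
      dAlpha α (M₁ + M₂) (N₁ + N₂) (ipConcat M₁ β₁ β₂) (ipConcat N₁ γ₁ γ₂) +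
        dAlpha α M₂ N₂ β₂ γ₂ :=
    le_dAlpha_add_dAlpha fun _ _ _ hWX _ _ _ hUV =>
      dAlpha_left_le_distortion_add hβ₁ hβ₂ hγ₁ hγ₂ hdβ₁ hdβ₂ hdγ₁ hdγ₂ hWX hUV
  have hright : dAlpha α M₂ N₂ β₂ γ₂ ≤
      dAlpha α (M₁ + M₂) (N₁ + N₂) (ipConcat M₁ β₁ β₂) (ipConcat N₁ γ₁ γ₂) +
        dAlpha α M₁ N₁ β₁ γ₁ :=
    le_dAlpha_add_dAlpha fun _ _ _ hWX _ _ _ hUV =>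
      dAlpha_right_le_distortion_add hβ₁ hβ₂ hγ₁ hγ₂ hdβ₁ hdβ₂ hdγ₁ hdγ₂ hWX hUV
  refine ⟨abs_sub_le_iff.2 ⟨by linarith, by linarith⟩, ?_⟩
  exact le_dAlpha_add_dAlpha fun _ _ _ h₁ _ _ _ h₂ =>
    dAlpha_ipConcat_le_distortion_add hβ₁ hβ₂ hγ₁ hγ₂ hdβ₁ hdβ₂ hdγ₁ hdγ₂ h₁ h₂

/-- For `α ∈ (0,1)` and interval partitions `β₁, β₂, γ₁, γ₂` with `α`-diversity,
`|d_α(β₂,γ₂) - d_α(β₁,γ₁)| ≤ d_α(β₁⋆β₂, γ₁⋆γ₂) ≤ d_α(β₁,γ₁) + d_α(β₂,γ₂)`. -/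
theorem dAlpha_concat_bound (α : ℝ) (hα : α ∈ Set.Ioo (0 : ℝ) 1)
    (M₁ M₂ N₁ N₂ : ℝ) (β₁ β₂ γ₁ γ₂ : Set (ℝ × ℝ))
    (hβ₁ : IsIntervalPartition M₁ β₁) (hβ₂ : IsIntervalPartition M₂ β₂)
    (hγ₁ : IsIntervalPartition N₁ γ₁) (hγ₂ : IsIntervalPartition N₂ γ₂)
    (hdβ₁ : HasDiversity α M₁ β₁) (hdβ₂ : HasDiversity α M₂ β₂)
    (hdγ₁ : HasDiversity α N₁ γ₁) (hdγ₂ : HasDiversity α N₂ γ₂) :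
    |dAlpha α M₂ N₂ β₂ γ₂ - dAlpha α M₁ N₁ β₁ γ₁| ≤
        dAlpha α (M₁ + M₂) (N₁ + N₂) (ipConcat M₁ β₁ β₂) (ipConcat N₁ γ₁ γ₂) ∧
      dAlpha α (M₁ + M₂) (N₁ + N₂) (ipConcat M₁ β₁ β₂) (ipConcat N₁ γ₁ γ₂) ≤
        dAlpha α M₁ N₁ β₁ γ₁ + dAlpha α M₂ N₂ β₂ γ₂ :=
  dAlpha_concat_bound_general α M₁ M₂ N₁ N₂ β₁ β₂ γ₁ γ₂ hβ₁ hβ₂ hγ₁ hγ₂ hdβ₁ hdβ₂ hdγ₁ hdγ₂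
end

section
/- Let K, Kₙ (n ≥ 1) be compact subsets of [0,∞) containing 0, and suppose d_H(Kₙ, K) → 0 in the Hausdorff metric. Then: (crit1) for every connected component (a,b) of [0, max K] \ K there exists n₀ ≥ 1 such that for all n ≥ n₀ there is a connected component (aₙ,bₙ) of [0, max Kₙ] \ Kₙ with aₙ → a and bₙ → b; and (crit2) whenever n_k → ∞ and (c_k,d_k) are connected components of [0, max K_{n_k}] \ K_{n_k} such that c_k converges to some c and d_k converges to some d ∈ (0,∞] with c ≠ d, then d < ∞ and (c,d) is a connected component of [0, max K] \ K. -/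
/-!
For compact sets at Hausdorff distance `r`, every point of either set lies within `r` of
the other. Hence a gap `(a, b)` of `K` leaves `(a + r, b - r)` free of `Kₙ`, and once
`2r < b - a` the gap of `Kₙ` around the midpoint of `(a, b)` has endpoints within `r` of
`a` and `b`; this is (crit1). Conversely, limits of gap endpoints of `K_{n_k}` lie in `K`
(in particular `d < ∞`), and a point of `K` strictly between them would be shadowed by a
point of `K_{n_k}` inside `(c_k, d_k)`; this is (crit2).
-/

open Filter Topology Set Metric

/-- `(a, b)` is a connected component (a "gap") of `[0, max K] \ K`, for `K` a compact
subset of `[0, ∞)` containing `0`: an open interval with endpoints in `K` containing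
no point of `K`. -/
def IsGap (K : Set ℝ) (a b : ℝ) : Prop :=
  a < b ∧ a ∈ K ∧ b ∈ K ∧ Set.Ioo a b ∩ K = ∅

/-- Criterion (crit1): every gap `(a, b)` of `K` is eventually approximated by gaps
`(aₙ, bₙ)` of `Kₙ` with `aₙ → a` and `bₙ → b`. -/
def Crit1 (K : Set ℝ) (Ks : ℕ → Set ℝ) : Prop :=
  ∀ a b : ℝ, IsGap K a b →
    ∃ (n₀ : ℕ) (A B : ℕ → ℝ),
      (∀ n ≥ n₀, IsGap (Ks n) (A n) (B n)) ∧
      Tendsto A atTop (𝓝 a) ∧ Tendsto B atTop (𝓝 b)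

/-- Criterion (crit2): whenever `n_k → ∞`, `(c_k, d_k)` are gaps of `K_{n_k}`,
`c_k → c ∈ ℝ` and `d_k → d ∈ (0, ∞]` (in the extended reals) with `c ≠ d`, then
`d < ∞` and `(c, d)` is a gap of `K`. -/
def Crit2 (K : Set ℝ) (Ks : ℕ → Set ℝ) : Prop :=
  ∀ nk : ℕ → ℕ, Tendsto nk atTop atTop →
    ∀ c d : ℕ → ℝ, (∀ k, IsGap (Ks (nk k)) (c k) (d k)) →
      ∀ (cl : ℝ) (dl : EReal), Tendsto c atTop (𝓝 cl) →
        Tendsto (fun k => ((d k : ℝ) : EReal)) atTop (𝓝 dl) →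
        0 < dl → (cl : EReal) ≠ dl →
        dl ≠ ⊤ ∧ IsGap K cl dl.toReal

section HausdorffDist

variable {α ι : Type*} [MetricSpace α]

theorem exists_dist_le_hausdorffDist {s t : Set α} {x : α} (hs : Bornology.IsBounded s)
    (ht : IsCompact t) (ht' : t.Nonempty) (hx : x ∈ s) :
    ∃ y ∈ t, dist x y ≤ hausdorffDist s t := by
  obtain ⟨y, hy, hxy⟩ := ht.exists_infDist_eq_dist ht' x
  refine ⟨y, hy, hxy ▸ infDist_le_hausdorffDist_of_mem hx ?_⟩
  exact hausdorffEDist_ne_top_of_nonempty_of_bounded ⟨x, hx⟩ ht' hs ht.isBounded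

theorem mem_of_tendsto_of_hausdorffDist_tendsto_zero {l : Filter ι} [l.NeBot] {K : Set α}
    {L : ι → Set α} {e : ι → α} {x : α} (hK : IsCompact K) (hK' : K.Nonempty)
    (hL : ∀ i, Bornology.IsBounded (L i))
    (hd : Tendsto (fun i => hausdorffDist (L i) K) l (𝓝 0)) (he : ∀ i, e i ∈ L i)
    (hx : Tendsto e l (𝓝 x)) : x ∈ K := by
  choose y hyK hy using fun i => exists_dist_le_hausdorffDist (hL i) hK hK' (he i)
  have hyx : Tendsto y l (𝓝 x) := by
    refine tendsto_iff_dist_tendsto_zero.2 (squeeze_zero (fun _ => dist_nonneg) (fun i => ?_)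
      (by simpa using hd.add (tendsto_iff_dist_tendsto_zero.1 hx)))
    calc dist (y i) x ≤ dist (e i) (y i) + dist (e i) x := dist_triangle_left _ _ _
      _ ≤ hausdorffDist (L i) K + dist (e i) x := by gcongr; exact hy i
  exact hK.isClosed.mem_of_tendsto hyx (Eventually.of_forall hyK)

end HausdorffDist

theorem eventually_le_sSup_add_one_of_hausdorffDist_tendsto_zero {ι : Type*} {l : Filter ι}
    {K : Set ℝ} {L : ι → Set ℝ} {e : ι → ℝ} (hK : IsCompact K) (hK' : K.Nonempty)
    (hL : ∀ i, Bornology.IsBounded (L i))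
    (hd : Tendsto (fun i => hausdorffDist (L i) K) l (𝓝 0)) (he : ∀ i, e i ∈ L i) :
    ∀ᶠ i in l, e i ≤ sSup K + 1 := by
  filter_upwards [hd.eventually_lt_const one_pos] with i hi
  obtain ⟨y, hyK, hy⟩ := exists_dist_le_hausdorffDist (hL i) hK hK' (he i)
  rw [Real.dist_eq, abs_le] at hy
  linarith [le_csSup hK.bddAbove hyK]

theorem Ioo_inter_eq_empty_of_hausdorffDist {K L : Set ℝ} {a b : ℝ}
    (hL : Bornology.IsBounded L) (hK : IsCompact K) (hK' : K.Nonempty) (h : Ioo a b ∩ K = ∅) :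
    Ioo (a + hausdorffDist L K) (b - hausdorffDist L K) ∩ L = ∅ := by
  refine eq_empty_of_forall_notMem fun y ⟨⟨hay, hyb⟩, hyL⟩ => ?_
  obtain ⟨x, hxK, hxy⟩ := exists_dist_le_hausdorffDist hL hK hK' hyL
  rw [Real.dist_eq, abs_le] at hxy
  exact eq_empty_iff_forall_notMem.1 h x ⟨⟨by linarith, by linarith⟩, hxK⟩

theorem Ioo_sSup_sInf_inter_eq_empty (L : Set ℝ) (m : ℝ) :
    Ioo (sSup (L ∩ Iic m)) (sInf (L ∩ Ici m)) ∩ L = ∅ := by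
  refine eq_empty_of_forall_notMem fun y ⟨⟨hAy, hyB⟩, hyL⟩ => ?_
  rcases le_total y m with hym | hmy
  · exact hAy.not_ge (le_csSup ⟨m, fun _ h => h.2⟩ ⟨hyL, hym⟩)
  · exact hyB.not_ge (csInf_le ⟨m, fun _ h => h.2⟩ ⟨hyL, hmy⟩)

theorem IsGap.isGap_sSup_sInf_of_hausdorffDist {K L : Set ℝ} {a b : ℝ} (hgap : IsGap K a b)
    (hK : IsCompact K) (hL : IsCompact L) (hL' : L.Nonempty) (h : 2 * hausdorffDist L K < b - a) :
    IsGap L (sSup (L ∩ Iic ((a + b) / 2))) (sInf (L ∩ Ici ((a + b) / 2))) ∧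
      dist (sSup (L ∩ Iic ((a + b) / 2))) a ≤ hausdorffDist L K ∧
      dist (sInf (L ∩ Ici ((a + b) / 2))) b ≤ hausdorffDist L K := by
  obtain ⟨-, haK, hbK, hKab⟩ := hgap
  set m := (a + b) / 2 with hm
  set r := hausdorffDist L K
  have hfree := Ioo_inter_eq_empty_of_hausdorffDist hL.isBounded hK ⟨a, haK⟩ hKab
  obtain ⟨z, hzL, hz⟩ := exists_dist_le_hausdorffDist hK.isBounded hL hL' haK
  obtain ⟨y, hyL, hy⟩ := exists_dist_le_hausdorffDist hK.isBounded hL hL' hbK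
  rw [hausdorffDist_comm, Real.dist_eq, abs_le] at hz hy
  have hzm : z ∈ L ∩ Iic m := ⟨hzL, show z ≤ m by linarith⟩
  have hym : y ∈ L ∩ Ici m := ⟨hyL, show m ≤ y by linarith⟩
  obtain ⟨hAL, hAm : sSup (L ∩ Iic m) ≤ m⟩ := (hL.inter_right isClosed_Iic).sSup_mem ⟨z, hzm⟩
  obtain ⟨hBL, hBm : m ≤ sInf (L ∩ Ici m)⟩ := (hL.inter_right isClosed_Ici).sInf_mem ⟨y, hym⟩
  have hzA := le_csSup ⟨m, fun _ h => h.2⟩ hzm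
  have hBy := csInf_le ⟨m, fun _ h => h.2⟩ hym
  have hAa : sSup (L ∩ Iic m) ≤ a + r := by
    by_contra! hlt
    exact eq_empty_iff_forall_notMem.1 hfree _ ⟨⟨hlt, by linarith⟩, hAL⟩
  have hBb : b - r ≤ sInf (L ∩ Ici m) := by
    by_contra! hlt
    exact eq_empty_iff_forall_notMem.1 hfree _ ⟨⟨by linarith, hlt⟩, hBL⟩
  refine ⟨⟨by linarith, hAL, hBL, Ioo_sSup_sInf_inter_eq_empty L m⟩, ?_, ?_⟩ <;>
    rw [Real.dist_eq, abs_le] <;> constructor <;> linarith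

theorem isGap_of_tendsto {ι : Type*} {l : Filter ι} [l.NeBot] {K : Set ℝ} {L : ι → Set ℝ}
    {c d : ι → ℝ} {c₀ d₀ : ℝ} (hK : IsCompact K) (hK' : K.Nonempty)
    (hL : ∀ i, IsCompact (L i)) (hL' : ∀ i, (L i).Nonempty)
    (hLK : Tendsto (fun i => hausdorffDist (L i) K) l (𝓝 0))
    (hgap : ∀ i, IsGap (L i) (c i) (d i)) (hc : Tendsto c l (𝓝 c₀)) (hd : Tendsto d l (𝓝 d₀))
    (hne : c₀ ≠ d₀) : IsGap K c₀ d₀ := by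
  have hLb := fun i => (hL i).isBounded
  refine ⟨(le_of_tendsto_of_tendsto' hc hd fun i => (hgap i).1.le).lt_of_ne hne,
    mem_of_tendsto_of_hausdorffDist_tendsto_zero hK hK' hLb hLK (fun i => (hgap i).2.1) hc,
    mem_of_tendsto_of_hausdorffDist_tendsto_zero hK hK' hLb hLK (fun i => (hgap i).2.2.1) hd, ?_⟩
  refine eq_empty_of_forall_notMem fun x ⟨⟨hcx, hxd⟩, hxK⟩ => ?_
  have hKL : Tendsto (fun i => hausdorffDist K (L i)) l (𝓝 0) := by
    simpa only [hausdorffDist_comm] using hLK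
  have hc' : Tendsto (fun i => c i + hausdorffDist K (L i)) l (𝓝 c₀) := by
    simpa using hc.add hKL
  have hd' : Tendsto (fun i => d i - hausdorffDist K (L i)) l (𝓝 d₀) := by
    simpa using hd.sub hKL
  obtain ⟨i, hci, hdi⟩ := (hc'.eventually_lt_const hcx |>.and (hd'.eventually_const_lt hxd)).exists
  exact eq_empty_iff_forall_notMem.1 (Ioo_inter_eq_empty_of_hausdorffDist hK.isBounded (hL i)
    (hL' i) (hgap i).2.2.2) x ⟨⟨hci, hdi⟩, hxK⟩

theorem Crit1.of_hausdorffDist_tendsto_zero {K : Set ℝ} {Ks : ℕ → Set ℝ} (hK : IsCompact K)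
    (hKs : ∀ n, IsCompact (Ks n)) (hKs' : ∀ n, (Ks n).Nonempty)
    (hconv : Tendsto (fun n => hausdorffDist (Ks n) K) atTop (𝓝 0)) : Crit1 K Ks := by
  intro a b hgap
  have hsmall : ∀ᶠ n in atTop, 2 * hausdorffDist (Ks n) K < b - a :=
    (hconv.eventually_lt_const (half_pos (sub_pos.2 hgap.1))).mono fun n hn => by linarith
  have happrox := hsmall.mono fun n hn =>
    hgap.isGap_sSup_sInf_of_hausdorffDist hK (hKs n) (hKs' n) hn
  obtain ⟨n₀, hn₀⟩ := eventually_atTop.1 happrox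
  refine ⟨n₀, _, _, fun n hn => (hn₀ n hn).1, ?_, ?_⟩ <;>
    refine tendsto_iff_dist_tendsto_zero.2
      (squeeze_zero' (Eventually.of_forall fun _ => dist_nonneg) ?_ hconv)
  exacts [happrox.mono fun n hn => hn.2.1, happrox.mono fun n hn => hn.2.2]

theorem Crit2.of_hausdorffDist_tendsto_zero {K : Set ℝ} {Ks : ℕ → Set ℝ} (hK : IsCompact K)
    (hK' : K.Nonempty) (hKs : ∀ n, IsCompact (Ks n)) (hKs' : ∀ n, (Ks n).Nonempty)
    (hconv : Tendsto (fun n => hausdorffDist (Ks n) K) atTop (𝓝 0)) : Crit2 K Ks := by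
  intro nk hnk c d hgap cl dl hc hd hdl hne
  have hconv' := hconv.comp hnk
  have hbdd : dl ≤ ((sSup K + 1 : ℝ) : EReal) := le_of_tendsto hd <|
    (eventually_le_sSup_add_one_of_hausdorffDist_tendsto_zero hK hK'
      (fun k => (hKs (nk k)).isBounded) hconv' fun k => (hgap k).2.2.1).mono
      fun k hk => EReal.coe_le_coe_iff.2 hk
  have htop : dl ≠ ⊤ := ne_top_of_le_ne_top (EReal.coe_ne_top _) hbdd
  obtain ⟨D, rfl⟩ : ∃ D : ℝ, (D : EReal) = dl :=
    ⟨dl.toReal, EReal.coe_toReal htop (ne_bot_of_gt hdl)⟩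
  refine ⟨htop, ?_⟩
  rw [EReal.toReal_coe]
  exact isGap_of_tendsto hK hK' (fun k => hKs (nk k)) (fun k => hKs' (nk k)) hconv' hgap hc
    (EReal.tendsto_coe.1 hd) (by exact_mod_cast hne)

theorem hausdorff_tendsto_implies_crit_general (K : Set ℝ) (Ks : ℕ → Set ℝ)
    (hK : IsCompact K) (hK0 : (0 : ℝ) ∈ K)
    (hKs : ∀ n, IsCompact (Ks n)) (hKs0 : ∀ n, (0 : ℝ) ∈ Ks n)
    (hconv : Tendsto (fun n => hausdorffDist (Ks n) K) atTop (𝓝 0)) :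
    Crit1 K Ks ∧ Crit2 K Ks :=
  ⟨.of_hausdorffDist_tendsto_zero hK hKs (fun n => ⟨0, hKs0 n⟩) hconv,
    .of_hausdorffDist_tendsto_zero hK ⟨0, hK0⟩ hKs (fun n => ⟨0, hKs0 n⟩) hconv⟩

/-- If `K, Kₙ` are compact subsets of `[0, ∞)` containing `0` and `d_H(Kₙ, K) → 0`,
then criteria (crit1) and (crit2) hold. -/
theorem hausdorff_tendsto_implies_crit (K : Set ℝ) (Ks : ℕ → Set ℝ)
    (hK : IsCompact K) (hK0 : (0 : ℝ) ∈ K) (hKpos : K ⊆ Set.Ici 0)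
    (hKs : ∀ n, IsCompact (Ks n)) (hKs0 : ∀ n, (0 : ℝ) ∈ Ks n)
    (hKspos : ∀ n, Ks n ⊆ Set.Ici 0)
    (hconv : Tendsto (fun n => hausdorffDist (Ks n) K) atTop (𝓝 0)) :
    Crit1 K Ks ∧ Crit2 K Ks :=
  hausdorff_tendsto_implies_crit_general K Ks hK hK0 hKs hKs0 hconv
end

section
/- For a decreasing sequence x = (x_i)_{i≥1} ∈ ∇̄_∞ (i.e. x₁ ≥ x₂ ≥ ⋯ ≥ 0 with Σ x_i ≤ 1), define s₀(x) := 0, s_i(x) := x₁ + ⋯ + x_i, and the canonical representative K(x) := [0,1] \ ∪_{i≥1} (s_{i−1}(x), s_{i−1}(x) + x_i). Then K(x) is a compact subset of [0,1] containing 0 and 1, and the map x ↦ K(x) is continuous from the set of decreasing sequences in (∇̄_∞, d_∞) to (𝒦₁, d_H): if decreasing sequences x^{(n)} converge to x in d_∞, then d_H(K(x^{(n)}), K(x)) → 0. -/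
open Filter Topology Set Metric

/-- Partial sums `s_n = x_0 + ⋯ + x_{n-1}`. -/
def partialSum (x : ℕ → ℝ) (n : ℕ) : ℝ := ∑ j ∈ Finset.range n, x j

/-- The canonical representative `K(x) = [0,1] \ ⋃_i (s_{i-1}, s_{i-1} + x_i)` of a
decreasing sequence `x ∈ ∇̄_∞`. -/
def Kof (x : ℕ → ℝ) : Set ℝ :=
  Set.Icc 0 1 \ ⋃ i : ℕ, Set.Ioo (partialSum x i) (partialSum x i + x i)

lemma partialSum_succ (x : ℕ → ℝ) (i : ℕ) :
    partialSum x (i + 1) = partialSum x i + x i := Finset.sum_range_succ x i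

lemma partialSum_mono {x : ℕ → ℝ} (hx0 : ∀ i, 0 ≤ x i) : Monotone (partialSum x) :=
  monotone_nat_of_le_succ fun n => by
    rw [partialSum_succ]; linarith [hx0 n]

lemma partialSum_nonneg {x : ℕ → ℝ} (hx0 : ∀ i, 0 ≤ x i) (n : ℕ) :
    0 ≤ partialSum x n :=
  Finset.sum_nonneg fun j _ => hx0 j

lemma partialSum_mem_Kof {x : ℕ → ℝ} (hx0 : ∀ i, 0 ≤ x i)
    (hxsum : ∀ n, partialSum x n ≤ 1) (j : ℕ) : partialSum x j ∈ Kof x := by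
  refine ⟨⟨partialSum_nonneg hx0 j, hxsum j⟩, ?_⟩
  intro h
  simp only [Set.mem_iUnion, Set.mem_Ioo] at h
  obtain ⟨i, h1, h2⟩ := h
  rw [← partialSum_succ] at h2
  rcases le_or_gt j i with hji | hij
  · exact absurd h1 (not_lt.2 (partialSum_mono hx0 hji))
  · exact absurd h2 (not_lt.2 (partialSum_mono hx0 hij))

lemma partialSum_diff_le {x y : ℕ → ℝ} {δ : ℝ} (hd : ∀ i, |x i - y i| ≤ δ) (k : ℕ) :
    |partialSum x k - partialSum y k| ≤ k * δ := by
  unfold partialSum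
  rw [← Finset.sum_sub_distrib]
  calc |∑ j ∈ Finset.range k, (x j - y j)| ≤ ∑ j ∈ Finset.range k, |x j - y j| :=
        Finset.abs_sum_le_sum_abs _ _
    _ ≤ ∑ j ∈ Finset.range k, δ := Finset.sum_le_sum fun j _ => hd j
    _ = k * δ := by simp [Finset.sum_const, nsmul_eq_mul]

lemma single_le_one {x : ℕ → ℝ} (hx0 : ∀ i, 0 ≤ x i)
    (hxsum : ∀ n, partialSum x n ≤ 1) (i : ℕ) : x i ≤ 1 := by
  refine le_trans ?_ (hxsum (i + 1))
  exact Finset.single_le_sum (f := x) (fun j _ => hx0 j) (Finset.self_mem_range_succ i)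

lemma antitone_bound {x : ℕ → ℝ} (hxa : Antitone x)
    (hxsum : ∀ n, partialSum x n ≤ 1) (N : ℕ) : ((N : ℝ) + 1) * x N ≤ 1 := by
  have h1 : ((N : ℝ) + 1) * x N = ∑ _j ∈ Finset.range (N + 1), x N := by
    simp [Finset.sum_const, nsmul_eq_mul]
  rw [h1]
  refine le_trans (Finset.sum_le_sum fun j hj => ?_) (hxsum (N + 1))
  exact hxa (Nat.le_of_lt_succ (Finset.mem_range.1 hj))

/-- Key one-sided approximation: every point of `Kof x` is close to a point of `Kof y`. -/
lemma Kof_approx {x y : ℕ → ℝ} (hy0 : ∀ i, 0 ≤ y i) (hya : Antitone y)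
    (hysum : ∀ n, partialSum y n ≤ 1)
    {N : ℕ} {δ δ' : ℝ} (hd : ∀ i, |x i - y i| ≤ δ') (hyN : y N ≤ δ) :
    ∀ t ∈ Kof x, ∃ u ∈ Kof y, dist t u ≤ max ((N : ℝ) * δ') δ := by
  have hδ : 0 ≤ δ := le_trans (hy0 N) hyN
  have hδ' : 0 ≤ δ' := le_trans (abs_nonneg _) (hd 0)
  intro t ht
  by_cases hty : t ∈ Kof y
  · exact ⟨t, hty, by rw [dist_self]; exact le_max_of_le_right hδ⟩
  have htIcc : t ∈ Set.Icc (0 : ℝ) 1 := ht.1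
  have htU : t ∈ ⋃ i : ℕ, Set.Ioo (partialSum y i) (partialSum y i + y i) := by
    by_contra h
    exact hty ⟨htIcc, h⟩
  simp only [Set.mem_iUnion, Set.mem_Ioo] at htU
  obtain ⟨j, hj1, hj2⟩ := htU
  rcases le_or_gt N j with hNj | hjN
  · -- far gap: gap length is small
    refine ⟨partialSum y j, partialSum_mem_Kof hy0 hysum j, ?_⟩
    have hyj : y j ≤ y N := hya hNj
    rw [Real.dist_eq, abs_of_pos (by linarith)]
    refine le_max_of_le_right (by linarith)
  · -- near gap: endpoints of the `y`-gap are close to those of the `x`-gap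
    have htx : t ∉ Set.Ioo (partialSum x j) (partialSum x j + x j) := by
      intro h
      exact ht.2 (Set.mem_iUnion.2 ⟨j, h⟩)
    simp only [Set.mem_Ioo, not_and, not_lt] at htx
    have hdiffj : |partialSum x j - partialSum y j| ≤ (j : ℝ) * δ' :=
      partialSum_diff_le hd j
    have hdiffj1 : |partialSum x (j + 1) - partialSum y (j + 1)| ≤ ((j : ℝ) + 1) * δ' := by
      have := partialSum_diff_le hd (j + 1)
      push_cast at this ⊢
      exact this
    have hjN' : (j : ℝ) + 1 ≤ (N : ℝ) := by exact_mod_cast hjN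
    rcases le_or_gt t (partialSum x j) with hcase | hcase
    · refine ⟨partialSum y j, partialSum_mem_Kof hy0 hysum j, ?_⟩
      rw [Real.dist_eq, abs_of_pos (by linarith)]
      have := abs_le.1 hdiffj
      refine le_max_of_le_left ?_
      nlinarith
    · have hcase' : partialSum x (j + 1) ≤ t := by
        rw [partialSum_succ]; exact htx hcase
      refine ⟨partialSum y (j + 1), partialSum_mem_Kof hy0 hysum (j + 1), ?_⟩
      have hj2' : t < partialSum y (j + 1) := by rw [partialSum_succ]; exact hj2
      rw [Real.dist_eq, abs_of_neg (by linarith)]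
      have := abs_le.1 hdiffj1
      refine le_max_of_le_left ?_
      nlinarith

/-- For a decreasing sequence `x ∈ ∇̄_∞`, the canonical representative `K(x)` is a
compact subset of `[0,1]` containing `0` and `1`, and `x ↦ K(x)` is continuous from
the decreasing sequences in `(∇̄_∞, d_∞)` to `(𝒦₁, d_H)`. -/
theorem Kof_compact_and_continuous (x : ℕ → ℝ)
    (hx0 : ∀ i, 0 ≤ x i) (hxa : Antitone x)
    (hxsum : ∀ n, ∑ j ∈ Finset.range n, x j ≤ 1) :
    IsCompact (Kof x) ∧ Kof x ⊆ Set.Icc 0 1 ∧ (0 : ℝ) ∈ Kof x ∧ (1 : ℝ) ∈ Kof x ∧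
      ∀ xs : ℕ → ℕ → ℝ,
        (∀ n i, 0 ≤ xs n i) → (∀ n, Antitone (xs n)) →
        (∀ n m, ∑ j ∈ Finset.range m, xs n j ≤ 1) →
        Tendsto (fun n => ⨆ i : ℕ, |xs n i - x i|) atTop (𝓝 0) →
        Tendsto (fun n => hausdorffDist (Kof (xs n)) (Kof x)) atTop (𝓝 0) := by
  have hxsum' : ∀ n, partialSum x n ≤ 1 := hxsum
  have hclosed : IsClosed (Kof x) :=
    IsClosed.sdiff isClosed_Icc (isOpen_iUnion fun i => isOpen_Ioo)
  have hsub : Kof x ⊆ Set.Icc 0 1 := Set.diff_subset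
  refine ⟨isCompact_Icc.of_isClosed_subset hclosed hsub, hsub, ?_, ?_, ?_⟩
  · have := partialSum_mem_Kof hx0 hxsum' 0
    simpa [partialSum] using this
  · refine ⟨⟨zero_le_one, le_refl 1⟩, ?_⟩
    intro h
    simp only [Set.mem_iUnion, Set.mem_Ioo] at h
    obtain ⟨i, h1, h2⟩ := h
    rw [← partialSum_succ] at h2
    exact absurd (hxsum' (i + 1)) (not_le.2 h2)
  · intro xs hxs0 hxsa hxssum hsup
    rw [Metric.tendsto_atTop]
    intro ε hε
    -- choose N with x N < ε / 3
    obtain ⟨N, hN⟩ := exists_nat_gt (3 / ε)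
    have hNpos : (0 : ℝ) < (N : ℝ) + 1 := by positivity
    have hxN : x N < ε / 3 := by
      have h1 : ((N : ℝ) + 1) * x N ≤ 1 := antitone_bound hxa hxsum' N
      have h2 : 3 / ε < (N : ℝ) + 1 := by linarith
      have h3 : (1 : ℝ) < ((N : ℝ) + 1) * (ε / 3) := by
        rw [div_lt_iff₀ hε] at hN
        nlinarith
      nlinarith
    set δ' : ℝ := ε / (3 * ((N : ℝ) + 1)) with hδ'def
    have hδ'pos : 0 < δ' := by positivity
    have hδ'le : δ' ≤ ε / 3 := by
      rw [hδ'def]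
      rw [div_le_div_iff₀ (by positivity) (by norm_num)]
      nlinarith
    have hNδ' : (N : ℝ) * δ' ≤ ε / 3 := by
      rw [hδ'def]
      rw [mul_div_assoc']
      rw [div_le_div_iff₀ (by positivity) (by norm_num)]
      nlinarith
    rw [Metric.tendsto_atTop] at hsup
    obtain ⟨n₀, hn₀⟩ := hsup δ' hδ'pos
    refine ⟨n₀, fun n hn => ?_⟩
    have hsupn : (⨆ i : ℕ, |xs n i - x i|) < δ' := by
      have := hn₀ n hn
      rw [Real.dist_eq, sub_zero] at this
      exact lt_of_abs_lt this
    have hbdd : BddAbove (Set.range fun i => |xs n i - x i|) := by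
      refine ⟨2, ?_⟩
      rintro r ⟨i, rfl⟩
      have h1 : xs n i ≤ 1 := single_le_one (hxs0 n) (hxssum n) i
      have h2 : x i ≤ 1 := single_le_one hx0 hxsum' i
      have h3 : |xs n i - x i| ≤ |xs n i| + |x i| := abs_sub _ _
      rw [abs_of_nonneg (hxs0 n i), abs_of_nonneg (hx0 i)] at h3
      linarith
    have hd : ∀ i, |xs n i - x i| ≤ δ' := fun i =>
      le_of_lt (lt_of_le_of_lt (le_ciSup hbdd i) hsupn)
    have hd' : ∀ i, |x i - xs n i| ≤ δ' := fun i => by rw [abs_sub_comm]; exact hd i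
    have hxsnN : xs n N ≤ 2 * ε / 3 := by
      have h4 := abs_le.1 (hd N)
      linarith
    have hxN' : x N ≤ 2 * ε / 3 := by linarith
    have hHD : hausdorffDist (Kof (xs n)) (Kof x) ≤ 2 * ε / 3 := by
      apply Metric.hausdorffDist_le_of_mem_dist (by positivity)
      · intro t ht
        obtain ⟨u, hu, hdist⟩ := Kof_approx hx0 hxa hxsum' hd hxN' t ht
        exact ⟨u, hu, le_trans hdist (max_le (by linarith) le_rfl)⟩
      · intro t ht
        obtain ⟨u, hu, hdist⟩ := Kof_approx (hxs0 n) (hxsa n) (hxssum n) hd' hxsnN t ht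
        exact ⟨u, hu, le_trans hdist (max_le (by linarith) le_rfl)⟩
    rw [Real.dist_eq, sub_zero, abs_of_nonneg Metric.hausdorffDist_nonneg]
    linarith
end

section
/- For every compact set K ⊆ [0,∞) with 0 ∈ K there exists a sequence of interval partitions βₙ ∈ I_H such that d_H(C(βₙ), K) → 0 in the Hausdorff metric; that is, {C(β) : β ∈ I_H} is dense in (𝒦, d_H). -/
open MeasureTheory Filter Topology Set Metric

/-- The complement set `C(β) = [0, M] \ ⋃_{U ∈ β} U` of an interval partition. -/
def ipComplement (M : ℝ) (β : Set (ℝ × ℝ)) : Set ℝ :=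
  Set.Icc 0 M \ ⋃ p ∈ β, Set.Ioo p.1 p.2

/-- The set of "gaps" of a finite set `F`: pairs of consecutive points of `F`. -/
def gapSet (F : Set ℝ) : Set (ℝ × ℝ) :=
  {p | p.1 ∈ F ∧ p.2 ∈ F ∧ p.1 < p.2 ∧ Set.Ioo p.1 p.2 ∩ F = ∅}

lemma gapSet_complement {M : ℝ} {F : Set ℝ} (hF : F.Finite) (hFM : F ⊆ Set.Icc 0 M)
    (h0 : (0 : ℝ) ∈ F) (hM : M ∈ F) :
    Set.Icc 0 M \ ⋃ p ∈ gapSet F, Set.Ioo p.1 p.2 = F := by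
  ext x
  constructor
  · rintro ⟨hx, hxc⟩
    by_contra hxF
    apply hxc
    have hx0 : 0 < x := lt_of_le_of_ne hx.1 (fun h => hxF (h ▸ h0))
    have hxM : x < M := lt_of_le_of_ne hx.2 (fun h => hxF (h ▸ hM))
    set A := (hF.toFinset).filter (fun y => y < x) with hA
    set B := (hF.toFinset).filter (fun y => x < y) with hB
    have hAne : A.Nonempty := ⟨0, by simp [hA, hF.mem_toFinset, h0, hx0]⟩
    have hBne : B.Nonempty := ⟨M, by simp [hB, hF.mem_toFinset, hM, hxM]⟩
    set a := A.max' hAne with ha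
    set b := B.min' hBne with hb
    have haA : a ∈ A := A.max'_mem hAne
    have hbB : b ∈ B := B.min'_mem hBne
    have haF : a ∈ F := by
      have := (Finset.mem_filter.mp haA).1; rwa [hF.mem_toFinset] at this
    have hbF : b ∈ F := by
      have := (Finset.mem_filter.mp hbB).1; rwa [hF.mem_toFinset] at this
    have hax : a < x := (Finset.mem_filter.mp haA).2
    have hxb : x < b := (Finset.mem_filter.mp hbB).2
    have hgap : Set.Ioo a b ∩ F = ∅ := by
      ext y
      simp only [Set.mem_inter_iff, Set.mem_Ioo, Set.mem_empty_iff_false, iff_false]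
      rintro ⟨⟨hay, hyb⟩, hyF⟩
      rcases lt_trichotomy y x with h | h | h
      · have : y ∈ A := Finset.mem_filter.mpr ⟨hF.mem_toFinset.mpr hyF, h⟩
        exact absurd (A.le_max' y this) (not_le.mpr hay)
      · exact hxF (h ▸ hyF)
      · have : y ∈ B := Finset.mem_filter.mpr ⟨hF.mem_toFinset.mpr hyF, h⟩
        exact absurd (B.min'_le y this) (not_le.mpr hyb)
    refine Set.mem_biUnion (show ((a, b) : ℝ × ℝ) ∈ gapSet F from ⟨haF, hbF, hax.trans hxb, hgap⟩) ?_
    exact ⟨hax, hxb⟩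
  · intro hxF
    refine ⟨hFM hxF, ?_⟩
    intro hmem
    rw [Set.mem_iUnion₂] at hmem
    obtain ⟨p, hp, hx⟩ := hmem
    have : x ∈ Set.Ioo p.1 p.2 ∩ F := ⟨hx, hxF⟩
    rw [hp.2.2.2] at this
    exact this

lemma gapSet_isIntervalPartition {M : ℝ} {F : Set ℝ} (hF : F.Finite)
    (hFM : F ⊆ Set.Icc 0 M) (h0 : (0 : ℝ) ∈ F) (hM : M ∈ F) :
    IsIntervalPartition M (gapSet F) := by
  have hM0 : 0 ≤ M := (hFM h0).2
  refine ⟨hM0, ?_, ?_, ?_⟩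
  · rintro p ⟨hp1, hp2, hlt, -⟩
    exact ⟨(hFM hp1).1, hlt, (hFM hp2).2⟩
  · rintro p ⟨hp1, hp2, hplt, hpg⟩ q ⟨hq1, hq2, hqlt, hqg⟩ hpq
    refine Set.disjoint_left.mpr fun x hxp hxq => hpq ?_
    have h1 : p.1 = q.1 := by
      rcases lt_trichotomy p.1 q.1 with h | h | h
      · have : q.1 ∈ Set.Ioo p.1 p.2 ∩ F := ⟨⟨h, lt_trans hxq.1 hxp.2⟩, hq1⟩
        rw [hpg] at this; exact absurd this (Set.notMem_empty _)
      · exact h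
      · have : p.1 ∈ Set.Ioo q.1 q.2 ∩ F := ⟨⟨h, lt_trans hxp.1 hxq.2⟩, hp1⟩
        rw [hqg] at this; exact absurd this (Set.notMem_empty _)
    have h2 : p.2 = q.2 := by
      rcases lt_trichotomy p.2 q.2 with h | h | h
      · have : p.2 ∈ Set.Ioo q.1 q.2 ∩ F := ⟨⟨lt_trans hxq.1 hxp.2, h⟩, hp2⟩
        rw [hqg] at this; exact absurd this (Set.notMem_empty _)
      · exact h
      · have : q.2 ∈ Set.Ioo p.1 p.2 ∩ F := ⟨⟨lt_trans hxp.1 hxq.2, h⟩, hq2⟩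
        rw [hpg] at this; exact absurd this (Set.notMem_empty _)
    exact Prod.ext h1 h2
  · rw [gapSet_complement hF hFM h0 hM]
    exact hF.measure_zero volume

/-- Every compact `K ⊆ [0, ∞)` with `0 ∈ K` is the Hausdorff limit of the complements
`C(βₙ)` of a sequence of interval partitions `βₙ ∈ I_H`: the set `{C(β) : β ∈ I_H}` is
dense in `(𝒦, d_H)`. -/
theorem intervalPartition_complements_dense (K : Set ℝ)
    (hK : IsCompact K) (hKpos : K ⊆ Set.Ici 0) (hK0 : (0 : ℝ) ∈ K) :
    ∃ (M : ℕ → ℝ) (β : ℕ → Set (ℝ × ℝ)),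
      (∀ n, IsIntervalPartition (M n) (β n)) ∧
      Tendsto (fun n => hausdorffDist (ipComplement (M n) (β n)) K) atTop (𝓝 0) := by
  have hKne : K.Nonempty := ⟨0, hK0⟩
  set M₀ := sSup K with hM₀
  have hMmem : M₀ ∈ K := hK.sSup_mem hKne
  have hKsub : K ⊆ Set.Icc 0 M₀ := fun x hx =>
    ⟨hKpos hx, le_csSup hK.bddAbove hx⟩
  -- finite nets
  have hnet : ∀ n : ℕ, ∃ F : Set ℝ, F.Finite ∧ F ⊆ K ∧ 0 ∈ F ∧ M₀ ∈ F ∧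
      ∀ x ∈ K, ∃ y ∈ F, dist x y ≤ 1 / (n + 1 : ℝ) := by
    intro n
    have hε : (0 : ℝ) < 1 / (n + 1 : ℝ) := by positivity
    obtain ⟨t, ht⟩ := hK.elim_finite_subcover (fun y : K => Metric.ball (y : ℝ) (1 / (n + 1 : ℝ)))
      (fun y => Metric.isOpen_ball)
      (fun x hx => Set.mem_iUnion.mpr ⟨⟨x, hx⟩, Metric.mem_ball_self hε⟩)
    refine ⟨(fun y : K => (y : ℝ)) '' ↑t ∪ {0, M₀}, ?_, ?_, ?_, ?_, ?_⟩
    · exact (t.finite_toSet.image _).union ((Set.finite_singleton M₀).insert 0)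
    · rintro y (⟨z, -, rfl⟩ | h)
      · exact z.2
      · rcases h with rfl | rfl
        · exact hK0
        · exact hMmem
    · exact Or.inr (Or.inl rfl)
    · exact Or.inr (Or.inr rfl)
    · intro x hx
      obtain ⟨y, hy, hxy⟩ := Set.mem_iUnion₂.mp (ht hx)
      exact ⟨(y : ℝ), Or.inl ⟨y, hy, rfl⟩, le_of_lt (by rwa [Metric.mem_ball] at hxy)⟩
  choose F hFfin hFK hF0 hFM hFnet using hnet
  have hFsub : ∀ n, F n ⊆ Set.Icc 0 M₀ := fun n => (hFK n).trans hKsub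
  refine ⟨fun _ => M₀, fun n => gapSet (F n), fun n =>
    gapSet_isIntervalPartition (hFfin n) (hFsub n) (hF0 n) (hFM n), ?_⟩
  have hcomp : ∀ n, ipComplement M₀ (gapSet (F n)) = F n := fun n =>
    gapSet_complement (hFfin n) (hFsub n) (hF0 n) (hFM n)
  have hbound : ∀ n, hausdorffDist (ipComplement M₀ (gapSet (F n))) K ≤ 1 / (n + 1 : ℝ) := by
    intro n
    rw [hcomp n]
    refine hausdorffDist_le_of_mem_dist (by positivity) ?_ (hFnet n)
    intro x hx
    exact ⟨x, hFK n hx, by simp; positivity⟩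
  exact squeeze_zero (fun n => hausdorffDist_nonneg) hbound
    tendsto_one_div_add_atTop_nhds_zero_nat
end

section
/- Let β be an interval partition with total mass ‖β‖ < ∞ and let σ = (σ₁,…,σ_ℓ) be a composition of n ≥ 1. Then the nonnegative family ( ∏_{j=1}^ℓ Leb(U_j)^{σ_j} ), indexed by strictly increasing ℓ-tuples U₁ < ⋯ < U_ℓ of blocks of β, is summable, and its sum satisfies m°_σ(β) ≤ (σ₁!⋯σ_ℓ! / n!) · ‖β‖^n. -/
open MeasureTheory Set

/-- `σ` is an integer composition of `n`: a finite list of positive integers summing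
to `n`. -/
def IsComposition (n : ℕ) (σ : List ℕ) : Prop :=
  (∀ p ∈ σ, 1 ≤ p) ∧ σ.sum = n

/-- The quasi-symmetric monomial `m°_σ(β) = Σ_{U₁ < ⋯ < U_ℓ ∈ β} ∏_j Leb(U_j)^{σ_j}`,
summing over strictly increasing `ℓ(σ)`-tuples of blocks of `β`. -/
noncomputable def mCirc (σ : List ℕ) (β : Set (ℝ × ℝ)) : ℝ :=
  ∑' U : {U : Fin σ.length → ℝ × ℝ // (∀ j, U j ∈ β) ∧ BlocksStrictMono U},
    ∏ j : Fin σ.length, ((U.1 j).2 - (U.1 j).1) ^ (σ.get j)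

/-- For an interval partition `β` of total mass `‖β‖ = M` and a composition `σ` of
`n ≥ 1`, the family defining `m°_σ(β)` is summable and
`m°_σ(β) ≤ (σ₁!⋯σ_ℓ!/n!) · ‖β‖^n`. -/
theorem mCirc_summable_and_le (M : ℝ) (β : Set (ℝ × ℝ))
    (hβ : IsIntervalPartition M β) (n : ℕ) (hn : 1 ≤ n)
    (σ : List ℕ) (hσ : IsComposition n σ) :
    Summable (fun U : {U : Fin σ.length → ℝ × ℝ // (∀ j, U j ∈ β) ∧ BlocksStrictMono U} =>
      ∏ j : Fin σ.length, ((U.1 j).2 - (U.1 j).1) ^ (σ.get j)) ∧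
    mCirc σ β ≤ ((σ.map Nat.factorial).prod : ℝ) / (n.factorial : ℝ) * M ^ n := by
  classical
  obtain ⟨hM, hblk, hdisj, -⟩ := hβ
  obtain ⟨hσpos, hσsum⟩ := hσ
  set T := {U : Fin σ.length → ℝ × ℝ // (∀ j, U j ∈ β) ∧ BlocksStrictMono U} with hT
  set f : T → ℝ := fun U =>
    ∏ j : Fin σ.length, ((U.1 j).2 - (U.1 j).1) ^ (σ.get j) with hfdef
  have hx : ∀ p ∈ β, (0 : ℝ) ≤ p.2 - p.1 := by
    intro p hp
    have := (hblk p hp).2.1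
    linarith
  have hf0 : ∀ U : T, 0 ≤ f U := fun U =>
    Finset.prod_nonneg fun j _ => pow_nonneg (hx _ (U.2.1 j)) _
  -- positivity of the factorial products
  have hP : (0 : ℕ) < (σ.map Nat.factorial).prod := by
    refine List.prod_pos ?_
    intro a ha
    obtain ⟨b, -, rfl⟩ := List.mem_map.1 ha
    exact Nat.factorial_pos b
  -- total length of finitely many blocks is at most M
  have key : ∀ F : Finset (ℝ × ℝ), (↑F : Set (ℝ × ℝ)) ⊆ β →
      ∑ p ∈ F, (p.2 - p.1) ≤ M := by
    intro F hF
    have hmeas : volume (⋃ p ∈ F, Set.Ioo p.1 p.2)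
        = ∑ p ∈ F, volume (Set.Ioo p.1 p.2) :=
      measure_biUnion_finset (hdisj.subset hF) fun p _ => measurableSet_Ioo
    have hsub : (⋃ p ∈ F, Set.Ioo p.1 p.2) ⊆ Set.Icc (0 : ℝ) M := by
      refine Set.iUnion₂_subset fun p hp => ?_
      obtain ⟨h1, h2, h3⟩ := hblk p (hF hp)
      intro y hy
      exact ⟨le_of_lt (lt_of_le_of_lt h1 hy.1), le_of_lt (lt_of_lt_of_le hy.2 h3)⟩
    have hle : ∑ p ∈ F, volume (Set.Ioo p.1 p.2) ≤ volume (Set.Icc (0 : ℝ) M) :=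
      hmeas ▸ measure_mono hsub
    rw [Real.volume_Icc, sub_zero] at hle
    have hvol : ∀ p ∈ F, volume (Set.Ioo p.1 p.2) = ENNReal.ofReal (p.2 - p.1) := by
      intro p _; rw [Real.volume_Ioo]
    rw [Finset.sum_congr rfl hvol,
      ← ENNReal.ofReal_sum_of_nonneg (fun p hp => hx p (hF hp))] at hle
    exact (ENNReal.ofReal_le_ofReal_iff hM).1 hle
  -- the main finite bound
  have main : ∀ S : Finset T,
      ∑ U ∈ S, f U ≤ ((σ.map Nat.factorial).prod : ℝ) / (n.factorial : ℝ) * M ^ n := by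
    intro S
    set x : ℝ × ℝ → ℝ := fun p => p.2 - p.1 with hxdef
    set F : Finset (ℝ × ℝ) := S.biUnion fun U => Finset.image U.1 Finset.univ with hFdef
    have hFβ : (↑F : Set (ℝ × ℝ)) ⊆ β := by
      intro p hp
      simp only [hFdef, Finset.coe_biUnion, Finset.mem_coe, Finset.mem_biUnion,
        Finset.mem_image, Finset.mem_univ, true_and, Set.mem_iUnion] at hp
      obtain ⟨U, -, j, rfl⟩ := hp
      exact U.2.1 j
    have hxF : ∀ p ∈ F, (0 : ℝ) ≤ x p := fun p hp => hx p (hFβ hp)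
    have hLM : ∑ p ∈ F, x p ≤ M := key F hFβ
    have hL0 : (0 : ℝ) ≤ ∑ p ∈ F, x p := Finset.sum_nonneg hxF
    -- injectivity of each tuple
    have hUinj : ∀ U : T, Function.Injective U.1 := by
      intro U i j hij
      by_contra hne
      rcases lt_or_gt_of_ne hne with h | h
      · have h1 := U.2.2 i j h
        have h2 := (hblk _ (U.2.1 i)).2.1
        rw [hij] at h2 h1
        exact absurd h1 (not_le.2 h2)
      · have h1 := U.2.2 j i h
        have h2 := (hblk _ (U.2.1 j)).2.1
        rw [hij] at h1
        exact absurd h1 (not_le.2 h2)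
    -- the exponent function of a tuple
    set k : T → (ℝ × ℝ) → ℕ :=
      fun U p => ∑ j : Fin σ.length, if U.1 j = p then σ.get j else 0 with hkdef
    have kval : ∀ (U : T) (i : Fin σ.length), k U (U.1 i) = σ.get i := by
      intro U i
      show (∑ j : Fin σ.length, if U.1 j = U.1 i then σ.get j else 0) = σ.get i
      rw [Finset.sum_eq_single i]
      · simp
      · intro j _ hji
        rw [if_neg]
        exact fun h => hji (hUinj U h)
      · simp
    have kzero : ∀ (U : T) (p : ℝ × ℝ), p ∉ Set.range U.1 → k U p = 0 := by
      intro U p hp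
      show (∑ j : Fin σ.length, if U.1 j = p then σ.get j else 0) = 0
      refine Finset.sum_eq_zero fun j _ => ?_
      rw [if_neg]
      exact fun h => hp ⟨j, h⟩
    have ksupp : ∀ (U : T) (p : ℝ × ℝ), k U p ≠ 0 → p ∈ Set.range U.1 := by
      intro U p h
      by_contra hc
      exact h (kzero U p hc)
    -- value of `k U` determines `U`
    have kinj : ∀ U V : T, k U = k V → U = V := by
      intro U V hUV
      have hrange : Set.range U.1 = Set.range V.1 := by
        have hmem : ∀ (W : T) (p : ℝ × ℝ), p ∈ Set.range W.1 ↔ k W p ≠ 0 := by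
          intro W p
          constructor
          · rintro ⟨i, rfl⟩
            rw [kval]
            have h1 : σ.get i ∈ σ := by simpa using σ.get_mem i.1 i.2
            have := hσpos _ h1
            omega
          · exact fun h => ksupp W p h
        ext p
        rw [hmem, hmem, hUV]
      have hsmU : StrictMono fun i => (U.1 i).1 := by
        intro i j hij
        exact lt_of_lt_of_le (hblk _ (U.2.1 i)).2.1 (U.2.2 i j hij)
      have hsmV : StrictMono fun i => (V.1 i).1 := by
        intro i j hij
        exact lt_of_lt_of_le (hblk _ (V.2.1 i)).2.1 (V.2.2 i j hij)
      have hrange1 : Set.range (fun i => (U.1 i).1) = Set.range (fun i => (V.1 i).1) := by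
        have : ∀ W : T, Set.range (fun i => (W.1 i).1) = Prod.fst '' Set.range W.1 := by
          intro W
          rw [← Set.range_comp]
          rfl
        rw [this, this, hrange]
      haveI : WellFoundedLT (Fin σ.length) := Finite.to_wellFoundedLT
      have hfst : (fun i => (U.1 i).1) = fun i => (V.1 i).1 :=
        (hsmU.range_inj hsmV).1 hrange1
      have hUV' : U.1 = V.1 := by
        funext i
        have hiU : U.1 i ∈ Set.range V.1 := hrange ▸ Set.mem_range_self i
        obtain ⟨j, hj⟩ := hiU
        have h1 : (V.1 j).1 = (V.1 i).1 := by
          rw [hj]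
          exact congrFun hfst i
        have : j = i := hsmV.injective h1
        rw [← hj, this]
      exact Subtype.ext hUV'
    -- membership in piAntidiag
    have himg : ∀ U ∈ S, ∀ i : Fin σ.length, U.1 i ∈ F := by
      intro U hU i
      simp only [hFdef, Finset.mem_biUnion, Finset.mem_image, Finset.mem_univ, true_and]
      exact ⟨U, hU, i, rfl⟩
    have ksum : ∀ U ∈ S, ∑ p ∈ F, k U p = n := by
      intro U hU
      have h1 : ∑ p ∈ F, k U p = ∑ p ∈ Finset.image U.1 Finset.univ, k U p := by
        refine (Finset.sum_subset ?_ ?_).symm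
        · intro p hp
          obtain ⟨i, -, rfl⟩ := Finset.mem_image.1 hp
          exact himg U hU i
        · intro p _ hp
          refine kzero U p fun ⟨i, hi⟩ => hp ?_
          exact Finset.mem_image.2 ⟨i, Finset.mem_univ i, hi⟩
      rw [h1, Finset.sum_image (fun i _ j _ h => hUinj U h)]
      have : ∀ i ∈ Finset.univ, k U (U.1 i) = σ.get i := fun i _ => kval U i
      rw [Finset.sum_congr rfl this]
      have : ∑ i : Fin σ.length, σ.get i = σ.sum := by
        simp [List.get_eq_getElem]
      rw [this, hσsum]
    have hmemPA : ∀ U ∈ S, k U ∈ Finset.piAntidiag F n := by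
      intro U hU
      rw [Finset.mem_piAntidiag]
      exact ⟨ksum U hU, fun p hp => by
        obtain ⟨i, rfl⟩ := ksupp U p hp
        exact himg U hU i⟩
    -- product of factorials of exponents
    have hprodfac : ∀ U ∈ S,
        ∏ p ∈ F, Nat.factorial (k U p) = (σ.map Nat.factorial).prod := by
      intro U hU
      have h1 : ∏ p ∈ F, Nat.factorial (k U p)
          = ∏ p ∈ Finset.image U.1 Finset.univ, Nat.factorial (k U p) := by
        refine (Finset.prod_subset ?_ ?_).symm
        · intro p hp
          obtain ⟨i, -, rfl⟩ := Finset.mem_image.1 hp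
          exact himg U hU i
        · intro p _ hp
          have : k U p = 0 := kzero U p fun ⟨i, hi⟩ =>
            hp (Finset.mem_image.2 ⟨i, Finset.mem_univ i, hi⟩)
          rw [this, Nat.factorial_zero]
      rw [h1, Finset.prod_image (fun i _ j _ h => hUinj U h)]
      have : ∀ i ∈ Finset.univ, Nat.factorial (k U (U.1 i)) = Nat.factorial (σ.get i) :=
        fun i _ => by rw [kval U i]
      rw [Finset.prod_congr rfl this]
      simp [List.get_eq_getElem]
    -- the monomial value
    have hmono : ∀ U ∈ S, ∏ p ∈ F, x p ^ (k U p) = f U := by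
      intro U hU
      have h1 : ∏ p ∈ F, x p ^ (k U p)
          = ∏ p ∈ Finset.image U.1 Finset.univ, x p ^ (k U p) := by
        refine (Finset.prod_subset ?_ ?_).symm
        · intro p hp
          obtain ⟨i, -, rfl⟩ := Finset.mem_image.1 hp
          exact himg U hU i
        · intro p _ hp
          have : k U p = 0 := kzero U p fun ⟨i, hi⟩ =>
            hp (Finset.mem_image.2 ⟨i, Finset.mem_univ i, hi⟩)
          rw [this, pow_zero]
      rw [h1, Finset.prod_image (fun i _ j _ h => hUinj U h)]
      exact Finset.prod_congr rfl fun i _ => by rw [kval U i]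
    -- multinomial value
    have hmul : ∀ U ∈ S,
        (σ.map Nat.factorial).prod * Nat.multinomial F (k U) = n.factorial := by
      intro U hU
      have := Nat.multinomial_spec F (k U)
      rw [hprodfac U hU, ksum U hU] at this
      exact this
    -- the multinomial expansion bound
    have expand : (∑ p ∈ F, x p) ^ n
        = ∑ g ∈ Finset.piAntidiag F n,
            (Nat.multinomial F g : ℝ) * ∏ p ∈ F, x p ^ g p :=
      Finset.sum_pow_eq_sum_piAntidiag F x n
    have himage : Finset.image (fun U : T => k U) S ⊆ Finset.piAntidiag F n := by
      intro g hg
      obtain ⟨U, hU, rfl⟩ := Finset.mem_image.1 hg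
      exact hmemPA U hU
    have hsum_le : ∑ U ∈ S, (Nat.multinomial F (k U) : ℝ) * ∏ p ∈ F, x p ^ (k U p)
        ≤ (∑ p ∈ F, x p) ^ n := by
      rw [expand]
      calc ∑ U ∈ S, (Nat.multinomial F (k U) : ℝ) * ∏ p ∈ F, x p ^ (k U p)
          = ∑ g ∈ S.image (fun U : T => k U),
              (Nat.multinomial F g : ℝ) * ∏ p ∈ F, x p ^ g p :=
            (Finset.sum_image
              (f := fun m => (Nat.multinomial F m : ℝ) * ∏ p ∈ F, x p ^ m p)
              fun U _ V _ h => kinj U V h).symm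
        _ ≤ ∑ g ∈ Finset.piAntidiag F n,
              (Nat.multinomial F g : ℝ) * ∏ p ∈ F, x p ^ g p := by
            refine Finset.sum_le_sum_of_subset_of_nonneg himage ?_
            intro g _ _
            refine mul_nonneg (Nat.cast_nonneg _) (Finset.prod_nonneg fun p hp => ?_)
            exact pow_nonneg (hxF p hp) _
    -- put it together
    have hpow : (∑ p ∈ F, x p) ^ n ≤ M ^ n := pow_le_pow_left₀ hL0 hLM n
    have hterm : ∀ U ∈ S,
        (Nat.multinomial F (k U) : ℝ) * ∏ p ∈ F, x p ^ (k U p)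
          = (n.factorial : ℝ) / ((σ.map Nat.factorial).prod : ℝ) * f U := by
      intro U hU
      rw [hmono U hU]
      congr 1
      have hPne : ((σ.map Nat.factorial).prod : ℝ) ≠ 0 := by
        exact_mod_cast hP.ne'
      rw [eq_div_iff hPne, mul_comm]
      exact_mod_cast hmul U hU
    have hfinal : (n.factorial : ℝ) / ((σ.map Nat.factorial).prod : ℝ) * ∑ U ∈ S, f U
        ≤ M ^ n := by
      rw [Finset.mul_sum]
      calc ∑ U ∈ S, (n.factorial : ℝ) / ((σ.map Nat.factorial).prod : ℝ) * f U
          = ∑ U ∈ S, (Nat.multinomial F (k U) : ℝ) * ∏ p ∈ F, x p ^ (k U p) :=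
            (Finset.sum_congr rfl hterm).symm
        _ ≤ (∑ p ∈ F, x p) ^ n := hsum_le
        _ ≤ M ^ n := hpow
    have hc : (0 : ℝ) < (n.factorial : ℝ) / ((σ.map Nat.factorial).prod : ℝ) := by
      apply div_pos
      · exact_mod_cast Nat.factorial_pos n
      · exact_mod_cast hP
    have h2 : ∑ U ∈ S, f U
        ≤ M ^ n / ((n.factorial : ℝ) / ((σ.map Nat.factorial).prod : ℝ)) := by
      rw [le_div_iff₀ hc, mul_comm]
      exact hfinal
    have h3 : M ^ n / ((n.factorial : ℝ) / ((σ.map Nat.factorial).prod : ℝ))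
        = ((σ.map Nat.factorial).prod : ℝ) / (n.factorial : ℝ) * M ^ n := by
      rw [div_div_eq_mul_div, div_mul_eq_mul_div, mul_comm]
    exact h2.trans_eq h3
  have hsummable : Summable f := summable_of_sum_le hf0 main
  refine ⟨hsummable, ?_⟩
  have : mCirc σ β = ∑' U : T, f U := rfl
  rw [this]
  exact Summable.tsum_le_of_sum_le hsummable main
end

section
/- The linear span of {m*_σ : σ ∈ C} and the linear span of {m°_σ : σ ∈ C}, as subspaces of the real vector space of all functions from I_{H,1} to ℝ, coincide: every m*_σ is a finite linear combination of the functions m°_τ, τ ∈ C, and every m°_σ is a finite linear combination of the functions m*_τ, τ ∈ C. -/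
open MeasureTheory Set

/-- The total mass of the blocks of `β` contained in `[u, v]`
(i.e. lying strictly between neighbouring chosen blocks). -/
noncomputable def massBetween (β : Set (ℝ × ℝ)) (u v : ℝ) : ℝ :=
  ∑' p : {p : ℝ × ℝ // p ∈ β ∧ u ≤ p.1 ∧ p.2 ≤ v}, (p.1.2 - p.1.1)

/-- `m*_σ(β)` for the composition
`σ = 1^{L 0} ⋆ s 0 ⋆ 1^{L 1} ⋆ s 1 ⋆ ⋯ ⋆ s (k-1) ⋆ 1^{L k}` (every composition
decomposes uniquely in this way with all `s i ≥ 2`): the sum over strictly increasing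
choices `U : Fin k → β` of
`‖β₀‖^{L 0} · ∏_i Leb(U i)^{s i} · ‖β_{i+1}‖^{L (i+1)}`, where `‖β_j‖` is the total
mass of the blocks of `β` between consecutive chosen blocks (or before the first /
after the last), and `M` is the total mass of `β`. -/
noncomputable def mStar (k : ℕ) (s : Fin k → ℕ) (L : Fin (k + 1) → ℕ) (M : ℝ)
    (β : Set (ℝ × ℝ)) : ℝ :=
  ∑' U : {U : Fin k → ℝ × ℝ // (∀ j, U j ∈ β) ∧ BlocksStrictMono U},
    massBetween β 0 (if h : 0 < k then (U.1 ⟨0, h⟩).1 else M) ^ (L 0) *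
      ∏ i : Fin k,
        (((U.1 i).2 - (U.1 i).1) ^ (s i) *
          massBetween β (U.1 i).2
              (if h : (i : ℕ) + 1 < k then (U.1 ⟨(i : ℕ) + 1, h⟩).1 else M) ^ (L i.succ))

/-- The set `I_{H,1}` of interval partitions of `[0,1]`. -/
def IH1 : Type := {β : Set (ℝ × ℝ) // IsIntervalPartition 1 β}

/-!
Both `m°_σ` and `m*_σ` are sums over increasing chains of blocks, weighted by powers of the block
lengths and of the masses of the gaps between consecutive chosen blocks; such a sum is encoded by a
pattern of (gap exponent, block exponent) pairs and a final gap exponent, and computed in `ℝ≥0∞`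
(all masses are at most `1`, so everything is finite). Writing the `t`-th power of a gap mass as a
sum over `t`-tuples of blocks and grouping by the leftmost block `p` and its multiplicity `r` gives
`‖γ‖^t = ∑_{r=1}^t C(t,r) ∑_p Leb(p)^r ‖γ to the right of p‖^(t-r)`.

Applying this to a gap with positive exponent lowers the total gap exponent, so every `m*_σ`
reduces to gapless patterns, which are the `m°_σ`. Conversely, a block of exponent `1` with no
gap in front of it is the `r = 1` term in the expansion of the next gap (which has exponent one
more), all other terms having block exponent `r ≥ 2`; solving for it removes the exponent-one
blocks from right to left and leaves patterns of `m*`-type.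
-/

open scoped ENNReal

theorem sum_Icc_choose_mul_pow_succ {R : Type*} [CommSemiring R] (x y : R) (t : ℕ) :
    ∑ r ∈ Finset.Icc 1 (t + 1), ((t + 1).choose r : R) * x ^ r * y ^ (t + 1 - r) =
      (x + y) * ∑ r ∈ Finset.Icc 1 t, (t.choose r : R) * x ^ r * y ^ (t - r) + x * y ^ t := by
  have shift : ∀ n : ℕ, ∑ r ∈ Finset.Icc 1 n, (n.choose r : R) * x ^ r * y ^ (n - r) =
      ∑ r ∈ Finset.range n, (n.choose (r + 1) : R) * x ^ (r + 1) * y ^ (n - (r + 1)) := by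
    intro n
    rw [Finset.range_eq_Ico,
      Finset.sum_Ico_add' (fun r => (n.choose r : R) * x ^ r * y ^ (n - r)), zero_add,
      Finset.Ico_add_one_right_eq_Icc]
  have hx : ∀ r ∈ Finset.range t,
      (t.choose (r + 1) : R) * x ^ (r + 1 + 1) * y ^ (t + 1 - (r + 1 + 1)) =
        x * ((t.choose (r + 1) : R) * x ^ (r + 1) * y ^ (t - (r + 1))) := by
    intro r _
    rw [show t + 1 - (r + 1 + 1) = t - (r + 1) by omega]
    ring
  have hy : ∀ r ∈ Finset.range t, (t.choose (r + 1) : R) * x ^ (r + 1) * y ^ (t + 1 - (r + 1)) =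
      y * ((t.choose (r + 1) : R) * x ^ (r + 1) * y ^ (t - (r + 1))) := by
    intro r hr
    rw [show t + 1 - (r + 1) = t - (r + 1) + 1 by have := Finset.mem_range.1 hr; omega]
    ring
  rw [shift, shift]
  simp only [Nat.choose_succ_succ', Nat.cast_add, add_mul, Finset.sum_add_distrib]
  rw [Finset.sum_range_succ', Finset.sum_range_succ (fun r => (t.choose (r + 1) : R) * _ * _),
    Finset.sum_congr rfl hx, Finset.sum_congr rfl hy, ← Finset.mul_sum, ← Finset.mul_sum,
    Nat.choose_succ_self, Nat.choose_zero_right, Nat.cast_zero, Nat.cast_one,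
    Nat.add_sub_add_right, Nat.sub_zero, Nat.sub_self, pow_zero]
  ring

namespace ENNReal

theorem tsum_eq_tsum_Iio_add_add_tsum_Ioi {G : Type*} [LinearOrder G] (w : G → ℝ≥0∞) (p : G) :
    ∑' q, w q = ∑' q : Set.Iio p, w q + w p + ∑' q : Set.Ioi p, w q := by
  have split : ∀ q, w q =
      (Set.Iio p).indicator w q + (if q = p then w p else 0) + (Set.Ioi p).indicator w q := by
    intro q
    rcases lt_trichotomy q p with h | rfl | h
    · simp [h, h.ne, h.not_gt]
    · simp
    · simp [h, h.ne', h.not_gt]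
  rw [tsum_congr split, ENNReal.tsum_add, ENNReal.tsum_add, tsum_ite_eq, _root_.tsum_subtype,
    _root_.tsum_subtype]

theorem tsum_mul_tsum_Iio {G : Type*} [Preorder G] (f g : G → ℝ≥0∞) :
    ∑' p, f p * ∑' q : Set.Iio p, g q = ∑' q, g q * ∑' p : Set.Ioi q, f p := by
  simp_rw [_root_.tsum_subtype, ← ENNReal.tsum_mul_left]
  rw [ENNReal.tsum_comm]
  refine tsum_congr fun q => tsum_congr fun p => ?_
  by_cases h : q < p <;> simp [Set.indicator, h, mul_comm]

/-- Expanding `(∑ w) ^ t` over `t`-tuples and grouping the tuples by their least entry `p` and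
the number `r` of entries equal to `p`. -/
theorem tsum_pow_eq_tsum_sum_choose {G : Type*} [LinearOrder G] (w : G → ℝ≥0∞) {t : ℕ}
    (ht : 1 ≤ t) :
    (∑' x, w x) ^ t = ∑' p, ∑ r ∈ Finset.Icc 1 t,
      (t.choose r : ℝ≥0∞) * w p ^ r * (∑' q : Set.Ioi p, w q) ^ (t - r) := by
  induction t, ht using Nat.le_induction generalizing G with
  | base => simp
  | succ t ht ih =>
    set S : G → ℝ≥0∞ := fun p => ∑' q : Set.Ioi p, w q
    set φ : G → ℝ≥0∞ := fun p =>
      ∑ r ∈ Finset.Icc 1 t, (t.choose r : ℝ≥0∞) * w p ^ r * S p ^ (t - r)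
    have tail : ∀ q, ∑' p : Set.Ioi q, φ p = S q ^ t := by
      intro q
      rw [ih (fun p : Set.Ioi q => w p)]
      refine tsum_congr fun p => Finset.sum_congr rfl fun r _ => ?_
      congr 3
      exact (Equiv.tsum_eq (⟨fun y => ⟨y.1.1, y.2⟩, fun y => ⟨⟨y.1, p.2.trans y.2⟩, y.2⟩,
        fun _ => rfl, fun _ => rfl⟩ : Set.Ioi p ≃ Set.Ioi (p : G)) (fun y => w y)).symm
    -- Split the new factor at `p`; by `tail`, its part left of `p` regroups into `w q * S q ^ t`.
    calc (∑' x, w x) ^ (t + 1) = ∑' p, φ p * ∑' x, w x := by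
          rw [pow_succ, ih w, ENNReal.tsum_mul_right]
      _ = ∑' p, φ p * (w p + S p) + ∑' p, φ p * ∑' q : Set.Iio p, w q := by
          rw [← ENNReal.tsum_add]
          refine tsum_congr fun p => ?_
          rw [tsum_eq_tsum_Iio_add_add_tsum_Ioi w p]
          ring
      _ = ∑' p, (φ p * (w p + S p) + w p * S p ^ t) := by
          rw [tsum_mul_tsum_Iio, ENNReal.tsum_add]
          simp only [tail]
      _ = _ := by
          refine tsum_congr fun p => ?_
          rw [sum_Icc_choose_mul_pow_succ]
          ring

theorem toReal_comp_eq_sum_smul {ι : Type*} {F : ι → ℝ≥0∞} (s : Finset ℕ) (c : ℕ → ℕ)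
    (G : ℕ → ι → ℝ≥0∞) (hG : ∀ r ∈ s, ∀ x, G r x ≠ ⊤)
    (h : ∀ x, F x = ∑ r ∈ s, (c r : ℝ≥0∞) * G r x) :
    (fun x => (F x).toReal) = ∑ r ∈ s, (c r : ℝ) • fun x => (G r x).toReal := by
  funext x
  rw [h, ENNReal.toReal_sum fun r hr => ENNReal.mul_ne_top (ENNReal.natCast_ne_top _) (hG r hr x),
    Finset.sum_apply]
  simp [ENNReal.toReal_mul]

end ENNReal

theorem Submodule.mem_of_sum_choose_smul_mem {K V : Type*} [Field K] [CharZero K]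
    [AddCommGroup V] [Module K V] {N : Submodule K V} {t : ℕ} (ht : 1 ≤ t) {G : V} {F : ℕ → V}
    (hG : G = ∑ r ∈ Finset.Icc 1 t, (t.choose r : K) • F r) (hGN : G ∈ N)
    (hF : ∀ r ∈ Finset.Ioc 1 t, F r ∈ N) : F 1 ∈ N := by
  rw [← Finset.add_sum_Ioc_eq_sum_Icc ht, Nat.choose_one_right] at hG
  have hrest := N.sum_mem fun r hr => N.smul_mem (t.choose r : K) (hF r hr)
  have ht' : (t : K) ≠ 0 := by exact_mod_cast (by omega : t ≠ 0)
  rw [← N.smul_mem_iff ht', ← N.add_mem_iff_left hrest, ← hG]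
  exact hGN

theorem BlocksStrictMono.cons {k : ℕ} {p : ℝ × ℝ} {V : Fin k → ℝ × ℝ} (hV : BlocksStrictMono V)
    (hp : ∀ j, p.2 ≤ (V j).1) : BlocksStrictMono (Fin.cons p V : Fin (k + 1) → ℝ × ℝ) := by
  intro i j hij
  cases j using Fin.cases with
  | zero => exact absurd hij (Fin.not_lt_zero i)
  | succ j =>
    cases i using Fin.cases with
    | zero => exact hp j
    | succ i => exact hV i j (Fin.succ_lt_succ_iff.1 hij)

theorem mCirc_eq_mStar (σ : List ℕ) (M : ℝ) (β : Set (ℝ × ℝ)) :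
    mCirc σ β = mStar σ.length σ.get 0 M β := by
  simp [mCirc, mStar]

namespace IsIntervalPartition

variable {M : ℝ} {B : Set (ℝ × ℝ)} {p q : ℝ × ℝ}

theorem fst_nonneg (hB : IsIntervalPartition M B) (hp : p ∈ B) : 0 ≤ p.1 := (hB.2.1 p hp).1

theorem fst_lt_snd (hB : IsIntervalPartition M B) (hp : p ∈ B) : p.1 < p.2 := (hB.2.1 p hp).2.1

theorem snd_le (hB : IsIntervalPartition M B) (hp : p ∈ B) : p.2 ≤ M := (hB.2.1 p hp).2.2

theorem snd_le_fst_of_ne (hB : IsIntervalPartition M B) (hp : p ∈ B) (hq : q ∈ B) (hne : p ≠ q)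
    (h : p.1 ≤ q.1) : p.2 ≤ q.1 := by
  by_contra! hlt
  have hdisj := hB.2.2.1 hp hq hne
  rw [Function.onFun, Set.disjoint_iff_inter_eq_empty, Set.Ioo_inter_Ioo,
    Set.Ioo_eq_empty_iff, max_eq_right h, lt_min_iff] at hdisj
  exact hdisj ⟨hlt, hB.fst_lt_snd hq⟩

theorem eq_of_fst_eq (hB : IsIntervalPartition M B) (hp : p ∈ B) (hq : q ∈ B) (h : p.1 = q.1) :
    p = q := by
  by_contra hne
  have := hB.snd_le_fst_of_ne hp hq hne h.le
  linarith [hB.fst_lt_snd hp]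

theorem snd_le_fst_of_fst_lt (hB : IsIntervalPartition M B) (hp : p ∈ B) (hq : q ∈ B)
    (h : p.1 < q.1) : p.2 ≤ q.1 :=
  hB.snd_le_fst_of_ne hp hq (fun e => h.ne (congrArg Prod.fst e)) h.le

end IsIntervalPartition

namespace IntervalPartition

variable {B : Set (ℝ × ℝ)}

def blockLen (p : ℝ × ℝ) : ℝ≥0∞ := ENNReal.ofReal (p.2 - p.1)

theorem toReal_blockLen {p : ℝ × ℝ} (h : p.1 ≤ p.2) : (blockLen p).toReal = p.2 - p.1 :=
  ENNReal.toReal_ofReal (sub_nonneg.2 h)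

theorem tsum_blockLen_le {M : ℝ} {ι : Type*} (hB : IsIntervalPartition M B) (g : ι → ℝ × ℝ)
    (hg : ∀ i, g i ∈ B) (hinj : Function.Injective g) :
    ∑' i, blockLen (g i) ≤ ENNReal.ofReal M := by
  calc ∑' i, blockLen (g i) = ∑' i, MeasureTheory.volume (Set.Ioo (g i).1 (g i).2) := by
        simp only [Real.volume_Ioo, blockLen]
    _ ≤ MeasureTheory.volume (⋃ i, Set.Ioo (g i).1 (g i).2) :=
        MeasureTheory.tsum_meas_le_meas_iUnion_of_disjoint _ (fun _ => measurableSet_Ioo)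
          fun i j hij => hB.2.2.1 (hg i) (hg j) (hinj.ne hij)
    _ ≤ MeasureTheory.volume (Set.Icc 0 M) := by
        refine MeasureTheory.measure_mono (Set.iUnion_subset fun i => ?_)
        exact Set.Ioo_subset_Icc_self.trans
          (Set.Icc_subset_Icc (hB.fst_nonneg (hg i)) (hB.snd_le (hg i)))
    _ = ENNReal.ofReal M := by rw [Real.volume_Icc, sub_zero]

def BlocksIn (B : Set (ℝ × ℝ)) (a b : ℝ) : Type := {p : ℝ × ℝ // p ∈ B ∧ a ≤ p.1 ∧ p.2 ≤ b}

noncomputable def massIn (B : Set (ℝ × ℝ)) (a b : ℝ) : ℝ≥0∞ := ∑' p : BlocksIn B a b, blockLen p.1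

theorem massIn_le_one (hB : IsIntervalPartition 1 B) (a b : ℝ) : massIn B a b ≤ 1 := by
  simpa [massIn] using tsum_blockLen_le hB (fun p : BlocksIn B a b => p.1) (fun p => p.2.1)
    fun _ _ h => Subtype.ext h

theorem massIn_ne_top (hB : IsIntervalPartition 1 B) (a b : ℝ) : massIn B a b ≠ ⊤ :=
  ne_top_of_le_ne_top ENNReal.one_ne_top (massIn_le_one hB a b)

theorem toReal_massIn (hB : IsIntervalPartition 1 B) (a b : ℝ) :
    (massIn B a b).toReal = massBetween B a b := by
  rw [massIn, massBetween, ENNReal.tsum_toReal_eq (f := fun p : BlocksIn B a b => blockLen p.1)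
    fun _ => ENNReal.ofReal_ne_top]
  exact tsum_congr fun p => toReal_blockLen (hB.fst_lt_snd p.2.1).le

theorem massIn_pow (hB : IsIntervalPartition 1 B) (a b : ℝ) {t : ℕ} (ht : 1 ≤ t) :
    massIn B a b ^ t = ∑ r ∈ Finset.Icc 1 t, (t.choose r : ℝ≥0∞) *
      ∑' p : BlocksIn B a b, blockLen p.1 ^ r * massIn B p.1.2 b ^ (t - r) := by
  let _ : LinearOrder (BlocksIn B a b) := LinearOrder.lift' (fun p => p.1.1)
    fun p q h => Subtype.ext (hB.eq_of_fst_eq p.2.1 q.2.1 h)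
  have later : ∀ p : BlocksIn B a b, ∑' q : Set.Ioi p, blockLen q.1.1 = massIn B p.1.2 b :=
    fun p => Equiv.tsum_eq
      (⟨fun q => ⟨q.1.1, q.1.2.1, hB.snd_le_fst_of_fst_lt p.2.1 q.1.2.1 q.2, q.1.2.2.2⟩,
        fun q => ⟨⟨q.1, q.2.1, p.2.2.1.trans ((hB.fst_lt_snd p.2.1).le.trans q.2.2.1),
          q.2.2.2⟩, (hB.fst_lt_snd p.2.1).trans_le q.2.2.1⟩,
        fun _ => rfl, fun _ => rfl⟩ : Set.Ioi p ≃ BlocksIn B p.1.2 b) fun q => blockLen q.1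
  conv_lhs => rw [massIn, ENNReal.tsum_pow_eq_tsum_sum_choose _ ht,
    Summable.tsum_finsetSum fun _ _ => ENNReal.summable]
  refine Finset.sum_congr rfl fun r _ => ?_
  rw [← ENNReal.tsum_mul_left]
  exact tsum_congr fun p => by rw [later, mul_assoc]

theorem tsum_tsum_blocksIn_comm (hB : IsIntervalPartition 1 B) (a b : ℝ)
    (H : ℝ × ℝ → ℝ × ℝ → ℝ≥0∞) :
    ∑' p : BlocksIn B a b, ∑' q : BlocksIn B a p.1.1, H q.1 p.1 =
      ∑' q : BlocksIn B a b, ∑' p : BlocksIn B q.1.2 b, H q.1 p.1 := by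
  rw [← ENNReal.tsum_sigma' (fun c : Σ p : BlocksIn B a b, BlocksIn B a p.1.1 => H c.2.1 c.1.1),
    ← ENNReal.tsum_sigma' (fun c : Σ q : BlocksIn B a b, BlocksIn B q.1.2 b => H c.1.1 c.2.1)]
  exact Equiv.tsum_eq
    (⟨fun c => ⟨⟨c.2.1, c.2.2.1, c.2.2.2.1,
        c.2.2.2.2.trans ((hB.fst_lt_snd c.1.2.1).le.trans c.1.2.2.2)⟩,
        ⟨c.1.1, c.1.2.1, c.2.2.2.2, c.1.2.2.2⟩⟩,
      fun c => ⟨⟨c.2.1, c.2.2.1,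
        c.1.2.2.1.trans ((hB.fst_lt_snd c.1.2.1).le.trans c.2.2.2.1), c.2.2.2.2⟩,
        ⟨c.1.1, c.1.2.1, c.1.2.2.1, c.2.2.2.1⟩⟩,
      fun _ => rfl, fun _ => rfl⟩ : (Σ p : BlocksIn B a b, BlocksIn B a p.1.1) ≃
        Σ q : BlocksIn B a b, BlocksIn B q.1.2 b)
    fun c => H c.1.1 c.2.1

/-- A pattern `d = [(g₁, s₁), …, (gₖ, sₖ)]` weights a chain of blocks `p₁ < ⋯ < pₖ` in `[a, 1]` by
`∏ᵢ ‖blocks between pᵢ₋₁ and pᵢ‖ ^ gᵢ · Leb(pᵢ) ^ sᵢ` (with `p₀` ending at `a`); `chainSum`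
sums these weights, each multiplied by the continuation `G` at the right end of `pₖ`. -/
noncomputable def chainSum (B : Set (ℝ × ℝ)) : List (ℕ × ℕ) → (ℝ → ℝ≥0∞) → ℝ → ℝ≥0∞
  | [], G, a => G a
  | q :: d, G, a =>
      ∑' p : BlocksIn B a 1, massIn B a p.1.1 ^ q.1 * (blockLen p.1 ^ q.2 * chainSum B d G p.1.2)

noncomputable def patternSum (B : Set (ℝ × ℝ)) (d : List (ℕ × ℕ)) (T : ℕ) (a : ℝ) : ℝ≥0∞ :=
  chainSum B d (fun x => massIn B x 1 ^ T) a

theorem chainSum_append (d₁ d₂ : List (ℕ × ℕ)) (G : ℝ → ℝ≥0∞) (a : ℝ) :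
    chainSum B (d₁ ++ d₂) G a = chainSum B d₁ (chainSum B d₂ G) a := by
  induction d₁ generalizing a with
  | nil => rfl
  | cons q d ih => simp only [List.cons_append, chainSum, ih]

theorem chainSum_finsetSum {ι : Type*} (s : Finset ι) (c : ι → ℝ≥0∞) (G : ι → ℝ → ℝ≥0∞)
    (d : List (ℕ × ℕ)) (a : ℝ) :
    chainSum B d (fun x => ∑ i ∈ s, c i * G i x) a = ∑ i ∈ s, c i * chainSum B d (G i) a := by
  induction d generalizing a with
  | nil => rfl
  | cons q d ih =>
    simp only [chainSum, ih, Finset.mul_sum, ← ENNReal.tsum_mul_left]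
    rw [← Summable.tsum_finsetSum fun _ _ => ENNReal.summable]
    exact tsum_congr fun p => Finset.sum_congr rfl fun i _ => by ring

theorem chainSum_cons_eq_sum_choose (hB : IsIntervalPartition 1 B) {t : ℕ} (ht : 1 ≤ t) (s : ℕ)
    (d : List (ℕ × ℕ)) (G : ℝ → ℝ≥0∞) (a : ℝ) :
    chainSum B ((t, s) :: d) G a = ∑ r ∈ Finset.Icc 1 t, (t.choose r : ℝ≥0∞) *
      chainSum B ((0, r) :: (t - r, s) :: d) G a := by
  simp only [chainSum, massIn_pow hB _ _ ht, Finset.sum_mul, mul_assoc, ← ENNReal.tsum_mul_right]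
  rw [Summable.tsum_finsetSum fun _ _ => ENNReal.summable]
  refine Finset.sum_congr rfl fun r _ => ?_
  rw [ENNReal.tsum_mul_left, tsum_tsum_blocksIn_comm hB a 1 fun q p =>
    blockLen q ^ r * (massIn B q.2 p.1 ^ (t - r) * (blockLen p ^ s * chainSum B d G p.2))]
  simp only [pow_zero, one_mul, ENNReal.tsum_mul_left]

theorem patternSum_eq_sum_choose_of_gap (hB : IsIntervalPartition 1 B) (pre : List (ℕ × ℕ))
    {t : ℕ} (ht : 1 ≤ t) (s : ℕ) (post : List (ℕ × ℕ)) (T : ℕ) (a : ℝ) :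
    patternSum B (pre ++ (t, s) :: post) T a = ∑ r ∈ Finset.Icc 1 t, (t.choose r : ℝ≥0∞) *
      patternSum B (pre ++ (0, r) :: (t - r, s) :: post) T a := by
  simp only [patternSum, chainSum_append]
  rw [← chainSum_finsetSum]
  congr 1
  funext x
  exact chainSum_cons_eq_sum_choose hB ht s post _ x

theorem patternSum_eq_sum_choose_of_last (hB : IsIntervalPartition 1 B) (d : List (ℕ × ℕ))
    {T : ℕ} (hT : 1 ≤ T) (a : ℝ) :
    patternSum B d T a = ∑ r ∈ Finset.Icc 1 T, (T.choose r : ℝ≥0∞) *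
      patternSum B (d ++ [(0, r)]) (T - r) a := by
  simp only [patternSum, chainSum_append]
  rw [← chainSum_finsetSum]
  congr 1
  funext x
  rw [massIn_pow hB x 1 hT]
  refine Finset.sum_congr rfl fun r _ => ?_
  simp [chainSum]

theorem patternSum_le_one (hB : IsIntervalPartition 1 B) {d : List (ℕ × ℕ)}
    (hd : ∀ x ∈ d, 1 ≤ x.2) (T : ℕ) (a : ℝ) : patternSum B d T a ≤ 1 := by
  induction d generalizing a with
  | nil => exact pow_le_one' (massIn_le_one hB a 1) T
  | cons q d ih =>
    rw [List.forall_mem_cons] at hd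
    calc patternSum B (q :: d) T a ≤ ∑' p : BlocksIn B a 1, blockLen p.1 := by
          refine ENNReal.tsum_le_tsum fun p => ?_
          have hlen : blockLen p.1 ≤ 1 := ENNReal.ofReal_le_one.2 (by
            linarith [hB.fst_nonneg p.2.1, p.2.2.2])
          calc massIn B a p.1.1 ^ q.1 * (blockLen p.1 ^ q.2 * patternSum B d T p.1.2)
              ≤ 1 * (blockLen p.1 ^ 1 * 1) :=
                mul_le_mul' (pow_le_one' (massIn_le_one hB _ _) _)
                  (mul_le_mul' (pow_le_pow_right_of_le_one' hlen hd.1) (ih hd.2 _))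
            _ = blockLen p.1 := by ring
      _ ≤ 1 := massIn_le_one hB a 1

abbrev IncBlocks (B : Set (ℝ × ℝ)) (a : ℝ) (k : ℕ) : Type :=
  {U : Fin k → ℝ × ℝ // (∀ j, U j ∈ B ∧ a ≤ (U j).1 ∧ (U j).2 ≤ 1) ∧ BlocksStrictMono U}

def IncBlocks.consEquiv (hB : IsIntervalPartition 1 B) (a : ℝ) (k : ℕ) :
    (Σ p : BlocksIn B a 1, IncBlocks B p.1.2 k) ≃ IncBlocks B a (k + 1) where
  toFun c := ⟨Fin.cons c.1.1 c.2.1,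
    Fin.cases c.1.2 fun j => ⟨(c.2.2.1 j).1,
      c.1.2.2.1.trans ((hB.fst_lt_snd c.1.2.1).le.trans (c.2.2.1 j).2.1), (c.2.2.1 j).2.2⟩,
    c.2.2.2.cons fun j => (c.2.2.1 j).2.1⟩
  invFun U := ⟨⟨U.1 0, U.2.1 0⟩, ⟨Fin.tail U.1, fun j => ⟨(U.2.1 j.succ).1,
    U.2.2 0 j.succ j.succ_pos, (U.2.1 j.succ).2.2⟩,
    fun i j hij => U.2.2 i.succ j.succ (Fin.succ_lt_succ_iff.2 hij)⟩⟩
  left_inv _ := rfl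
  right_inv U := Subtype.ext (Fin.cons_self_tail U.1)

@[simp]
theorem IncBlocks.coe_consEquiv (hB : IsIntervalPartition 1 B) (a : ℝ) (k : ℕ)
    (c : Σ p : BlocksIn B a 1, IncBlocks B p.1.2 k) :
    (IncBlocks.consEquiv hB a k c).1 = Fin.cons c.1.1 c.2.1 := rfl

/-- The summand of `mStar k s L 1 B`, with the first gap starting at `a`. -/
noncomputable def mStarTerm (B : Set (ℝ × ℝ)) (a : ℝ) (k : ℕ) (s : Fin k → ℕ)
    (L : Fin (k + 1) → ℕ) (U : Fin k → ℝ × ℝ) : ℝ≥0∞ :=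
  massIn B a (if h : 0 < k then (U ⟨0, h⟩).1 else 1) ^ L 0 *
    ∏ i : Fin k, (blockLen (U i) ^ s i *
      massIn B (U i).2 (if h : (i : ℕ) + 1 < k then (U ⟨(i : ℕ) + 1, h⟩).1 else 1) ^ L i.succ)

theorem mStarTerm_cons (a : ℝ) (k : ℕ) (s : Fin (k + 1) → ℕ) (L : Fin (k + 2) → ℕ)
    (p : ℝ × ℝ) (V : Fin k → ℝ × ℝ) :
    mStarTerm B a (k + 1) s L (Fin.cons p V) = massIn B a p.1 ^ L 0 *
      (blockLen p ^ s 0 * mStarTerm B p.2 k (Fin.tail s) (Fin.tail L) V) := by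
  have next : ∀ n (h : n + 1 < k + 1),
      (Fin.cons p V : Fin (k + 1) → ℝ × ℝ) ⟨n + 1, h⟩ = V ⟨n, by omega⟩ := fun _ _ => rfl
  simp only [mStarTerm, Fin.prod_univ_succ, Fin.cons_zero, Fin.cons_succ, Fin.val_succ,
    Fin.val_zero, Fin.tail, next, Nat.add_lt_add_iff_right, Nat.zero_lt_succ, dif_pos,
    Fin.zero_eta, mul_assoc]
  rfl

theorem tsum_mStarTerm (hB : IsIntervalPartition 1 B) (a : ℝ) (k : ℕ) (s : Fin k → ℕ)
    (L : Fin (k + 1) → ℕ) :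
    ∑' U : IncBlocks B a k, mStarTerm B a k s L U.1 =
      patternSum B (List.ofFn fun i => (L i.castSucc, s i)) (L (Fin.last k)) a := by
  induction k generalizing a with
  | zero =>
    let U₀ : IncBlocks B a 0 := ⟨Fin.elim0, fun j => j.elim0, fun i => i.elim0⟩
    rw [tsum_eq_single U₀ fun U hU => absurd (Subtype.ext (funext fun i => i.elim0)) hU]
    simp [mStarTerm, patternSum, chainSum]
  | succ k ih =>
    rw [← (IncBlocks.consEquiv hB a k).tsum_eq, ENNReal.tsum_sigma']
    simp only [IncBlocks.coe_consEquiv, mStarTerm_cons, ENNReal.tsum_mul_left, ih]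
    rw [patternSum, List.ofFn_succ]
    rfl

theorem mStarTerm_ne_top (hB : IsIntervalPartition 1 B) (a : ℝ) (k : ℕ) (s : Fin k → ℕ)
    (L : Fin (k + 1) → ℕ) (U : Fin k → ℝ × ℝ) : mStarTerm B a k s L U ≠ ⊤ := by
  refine ENNReal.mul_ne_top (ENNReal.pow_ne_top (massIn_ne_top hB _ _))
    (ENNReal.prod_ne_top fun i _ => ENNReal.mul_ne_top (ENNReal.pow_ne_top ENNReal.ofReal_ne_top)
      (ENNReal.pow_ne_top (massIn_ne_top hB _ _)))

theorem mStar_eq_toReal (hB : IsIntervalPartition 1 B) (k : ℕ) (s : Fin k → ℕ)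
    (L : Fin (k + 1) → ℕ) :
    mStar k s L 1 B = (∑' U : IncBlocks B 0 k, mStarTerm B 0 k s L U.1).toReal := by
  let e : IncBlocks B 0 k ≃ {U : Fin k → ℝ × ℝ // (∀ j, U j ∈ B) ∧ BlocksStrictMono U} :=
    ⟨fun U => ⟨U.1, fun j => (U.2.1 j).1, U.2.2⟩,
      fun U => ⟨U.1, fun j => ⟨U.2.1 j, hB.fst_nonneg (U.2.1 j), hB.snd_le (U.2.1 j)⟩, U.2.2⟩,
      fun _ => rfl, fun _ => rfl⟩
  rw [mStar, ← e.tsum_eq, ENNReal.tsum_toReal_eq fun U : IncBlocks B 0 k =>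
    mStarTerm_ne_top hB 0 k s L U.1]
  refine tsum_congr fun U => ?_
  simp only [mStarTerm, ENNReal.toReal_mul, ENNReal.toReal_prod, ENNReal.toReal_pow,
    toReal_massIn hB, toReal_blockLen (hB.fst_lt_snd (U.2.1 _).1).le]
  rfl

theorem patternSum_ne_top (hB : IsIntervalPartition 1 B) {d : List (ℕ × ℕ)}
    (hd : ∀ x ∈ d, 1 ≤ x.2) (T : ℕ) (a : ℝ) : patternSum B d T a ≠ ⊤ :=
  ne_top_of_le_ne_top ENNReal.one_ne_top (patternSum_le_one hB hd T a)

noncomputable def patternFun (d : List (ℕ × ℕ)) (T : ℕ) : IH1 → ℝ :=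
  fun β => (patternSum β.1 d T 0).toReal

theorem mStar_eq_patternFun (k : ℕ) (s : Fin k → ℕ) (L : Fin (k + 1) → ℕ) :
    (fun β : IH1 => mStar k s L 1 β.1) =
      patternFun (List.ofFn fun i => (L i.castSucc, s i)) (L (Fin.last k)) :=
  funext fun β => by rw [mStar_eq_toReal β.2, tsum_mStarTerm β.2]; rfl

theorem mCirc_eq_patternFun (σ : List ℕ) :
    (fun β : IH1 => mCirc σ β.1) = patternFun (σ.map fun n => (0, n)) 0 := by
  simp only [mCirc_eq_mStar σ 1, mStar_eq_patternFun]
  congr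
  conv_rhs => rw [← List.ofFn_get σ, List.map_ofFn]
  rfl

theorem patternFun_eq_sum_choose_of_gap (pre : List (ℕ × ℕ)) {t : ℕ} (ht : 1 ≤ t) (s : ℕ)
    (post : List (ℕ × ℕ)) (T : ℕ) (hd : ∀ x ∈ pre ++ (t, s) :: post, 1 ≤ x.2) :
    patternFun (pre ++ (t, s) :: post) T = ∑ r ∈ Finset.Icc 1 t, (t.choose r : ℝ) •
      patternFun (pre ++ (0, r) :: (t - r, s) :: post) T := by
  simp only [List.forall_mem_append, List.forall_mem_cons] at hd
  refine ENNReal.toReal_comp_eq_sum_smul _ _ _ (fun r hr β => patternSum_ne_top β.2 ?_ T 0)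
    fun β => patternSum_eq_sum_choose_of_gap β.2 pre ht s post T 0
  simp only [List.forall_mem_append, List.forall_mem_cons]
  exact ⟨hd.1, (Finset.mem_Icc.1 hr).1, hd.2⟩

theorem patternFun_eq_sum_choose_of_last (d : List (ℕ × ℕ)) {T : ℕ} (hT : 1 ≤ T)
    (hd : ∀ x ∈ d, 1 ≤ x.2) :
    patternFun d T =
      ∑ r ∈ Finset.Icc 1 T, (T.choose r : ℝ) • patternFun (d ++ [(0, r)]) (T - r) := by
  refine ENNReal.toReal_comp_eq_sum_smul _ _ _ (fun r hr β => patternSum_ne_top β.2 ?_ _ 0)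
    fun β => patternSum_eq_sum_choose_of_last β.2 d hT 0
  simp only [List.forall_mem_append, List.forall_mem_singleton]
  exact ⟨hd, (Finset.mem_Icc.1 hr).1⟩

noncomputable def mCircSpan : Submodule ℝ (IH1 → ℝ) :=
  Submodule.span ℝ {f : IH1 → ℝ | ∃ σ : List ℕ, (∀ p ∈ σ, 1 ≤ p) ∧ f = fun β => mCirc σ β.1}

noncomputable def mStarSpan : Submodule ℝ (IH1 → ℝ) :=
  Submodule.span ℝ {f : IH1 → ℝ | ∃ (k : ℕ) (s : Fin k → ℕ) (L : Fin (k + 1) → ℕ),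
    (∀ i, 2 ≤ s i) ∧ f = fun β => mStar k s L 1 β.1}

theorem patternFun_mem_mStarSpan {d : List (ℕ × ℕ)} (hd : ∀ x ∈ d, 2 ≤ x.2) (T : ℕ) :
    patternFun d T ∈ mStarSpan := by
  have hgen : (fun β : IH1 => mStar d.length (fun i => (d.get i).2)
      (Fin.lastCases T fun i => (d.get i).1) 1 β.1) ∈ mStarSpan :=
    Submodule.subset_span ⟨_, _, _, fun i => hd _ (d.get_mem i), rfl⟩
  rw [mStar_eq_patternFun] at hgen
  convert hgen using 2
  · simp
  · simp

theorem patternFun_append_mem_mStarSpan {pre : List (ℕ × ℕ)}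
    (hpre : ∀ x ∈ pre, 1 ≤ x.2 ∧ (x.2 = 1 → x.1 = 0)) {post : List (ℕ × ℕ)}
    (hpost : ∀ x ∈ post, 2 ≤ x.2) (T : ℕ) : patternFun (pre ++ post) T ∈ mStarSpan := by
  induction pre using List.reverseRecOn generalizing post T with
  | nil => exact patternFun_mem_mStarSpan hpost T
  | append_singleton pre x ih =>
    -- A block `(0, 1)` is the `r = 1` term of the expansion of the gap after it.
    simp only [List.forall_mem_append, List.forall_mem_singleton] at hpre
    obtain ⟨hpre, hx⟩ := hpre
    have hexp : ∀ y ∈ pre, 1 ≤ y.2 := fun y hy => (hpre y hy).1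
    obtain ⟨g, s⟩ := x
    obtain rfl | hs : s = 1 ∨ 2 ≤ s := by have := hx.1; omega
    · obtain rfl : g = 0 := hx.2 rfl
      cases post with
      | nil =>
        have := Submodule.mem_of_sum_choose_smul_mem (by omega : 1 ≤ T + 1)
          (patternFun_eq_sum_choose_of_last pre le_add_self hexp)
          (by simpa using ih hpre (post := []) (by simp) (T + 1))
          fun r hr => ih hpre (post := [(0, r)])
            (List.forall_mem_singleton.2 (Finset.mem_Ioc.1 hr).1) _
        simpa using this
      | cons y post =>
        obtain ⟨g₂, s₂⟩ := y
        simp only [List.forall_mem_cons] at hpost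
        have := Submodule.mem_of_sum_choose_smul_mem (by omega : 1 ≤ g₂ + 1)
          (patternFun_eq_sum_choose_of_gap pre le_add_self s₂ post T
            (List.forall_mem_append.2 ⟨hexp, List.forall_mem_cons.2
              ⟨one_le_two.trans hpost.1, fun y hy => one_le_two.trans (hpost.2 y hy)⟩⟩))
          (ih hpre (List.forall_mem_cons.2 hpost) T)
          fun r hr => ih hpre (post := (0, r) :: (g₂ + 1 - r, s₂) :: post) (List.forall_mem_cons.2
            ⟨(Finset.mem_Ioc.1 hr).1, List.forall_mem_cons.2 hpost⟩) T
        simpa using this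
    · rw [List.append_assoc, List.singleton_append]
      exact ih hpre (List.forall_mem_cons.2 ⟨hs, hpost⟩) T

theorem mCirc_mem_mStarSpan {σ : List ℕ} (hσ : ∀ p ∈ σ, 1 ≤ p) :
    (fun β : IH1 => mCirc σ β.1) ∈ mStarSpan := by
  rw [mCirc_eq_patternFun, ← List.append_nil (σ.map _)]
  refine patternFun_append_mem_mStarSpan ?_ (by simp) 0
  simpa using hσ

theorem patternFun_mem_mCircSpan {d : List (ℕ × ℕ)} (hd : ∀ x ∈ d, 1 ≤ x.2) (T : ℕ) :
    patternFun d T ∈ mCircSpan := by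
  obtain ⟨n, hn⟩ : ∃ n, T + (d.map Prod.fst).sum = n := ⟨_, rfl⟩
  induction n using Nat.strong_induction_on generalizing d T with
  | _ n ih =>
    rcases Nat.eq_zero_or_pos T with rfl | hT
    · by_cases hgap : ∀ x ∈ d, x.1 = 0
      · have hd' : d = (d.map Prod.snd).map fun s => (0, s) := by
          rw [List.map_map]
          conv_lhs => rw [← List.map_id d]
          exact List.map_congr_left fun x hx => Prod.ext (hgap x hx) rfl
        rw [hd', ← mCirc_eq_patternFun]
        exact Submodule.subset_span ⟨_, List.forall_mem_map.2 hd, rfl⟩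
      · push Not at hgap
        obtain ⟨⟨g, s⟩, hx, hg⟩ := hgap
        obtain ⟨pre, post, rfl⟩ := List.append_of_mem hx
        rw [patternFun_eq_sum_choose_of_gap pre (Nat.one_le_iff_ne_zero.2 hg) s post 0 hd]
        refine Submodule.sum_mem _ fun r hr => Submodule.smul_mem _ _ (ih _ ?_ ?_ 0 rfl)
        · simp only [List.map_append, List.map_cons, List.sum_append, List.sum_cons] at hn ⊢
          have := Finset.mem_Icc.1 hr
          omega
        · simp only [List.forall_mem_append, List.forall_mem_cons] at hd ⊢
          exact ⟨hd.1, (Finset.mem_Icc.1 hr).1, hd.2⟩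
    · rw [patternFun_eq_sum_choose_of_last d hT hd]
      refine Submodule.sum_mem _ fun r hr => Submodule.smul_mem _ _ (ih _ ?_ ?_ _ rfl)
      · simp only [List.map_append, List.map_cons, List.map_nil, List.sum_append, List.sum_cons,
          List.sum_nil] at hn ⊢
        have := Finset.mem_Icc.1 hr
        omega
      · simp only [List.forall_mem_append, List.forall_mem_singleton]
        exact ⟨hd, (Finset.mem_Icc.1 hr).1⟩

theorem mStar_mem_mCircSpan (k : ℕ) (s : Fin k → ℕ) (L : Fin (k + 1) → ℕ) (hs : ∀ i, 1 ≤ s i) :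
    (fun β : IH1 => mStar k s L 1 β.1) ∈ mCircSpan := by
  rw [mStar_eq_patternFun]
  refine patternFun_mem_mCircSpan ?_ _
  simpa [List.mem_ofFn] using hs

end IntervalPartition

open IntervalPartition

/-- As subspaces of the real vector space of functions `I_{H,1} → ℝ`, the linear span
of the functions `m°_σ` (over all compositions `σ`) coincides with the linear span of
the functions `m*_σ` (over all compositions, parametrized as
`σ = 1^{L 0} ⋆ s 0 ⋆ 1^{L 1} ⋆ ⋯ ⋆ s (k-1) ⋆ 1^{L k}` with all `s i ≥ 2`). -/
theorem span_mCirc_eq_span_mStar :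
    Submodule.span ℝ {f : IH1 → ℝ | ∃ σ : List ℕ, (∀ p ∈ σ, 1 ≤ p) ∧
        f = fun β => mCirc σ β.1} =
      Submodule.span ℝ {f : IH1 → ℝ |
        ∃ (k : ℕ) (s : Fin k → ℕ) (L : Fin (k + 1) → ℕ),
          (∀ i, 2 ≤ s i) ∧ f = fun β => mStar k s L 1 β.1} := by
  refine le_antisymm (Submodule.span_le.2 ?_) (Submodule.span_le.2 ?_)
  · rintro f ⟨σ, hσ, rfl⟩
    exact mCirc_mem_mStarSpan hσ
  · rintro f ⟨k, s, L, hs, rfl⟩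
    exact mStar_mem_mCircSpan k s L fun i => one_le_two.trans (hs i)
end

section
/- For all θ > 0 and y, b > 0, the function c ↦ q_y(b,c) is a probability density on (0,∞): ∫₀^∞ q_y(b,c) dc = 1, where q_y(b,c) := (1/(2y)) (c/b)^{(θ−1)/2} exp(−(b+c)/(2y)) I_{θ−1}(√(bc)/y). -/
/-!
Expanding the Bessel series term by term shows that `c ↦ q_y(b, c)` is the Poisson mixture
`∑ₘ e^{-λ} λ^m / m! · γ_{m+θ, r}(c)` of Gamma densities, with rate `r = 1/(2y)` and Poisson
parameter `λ = b/(2y)`. Each Gamma density integrates to `1` and the Poisson weights sum to `1`,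
and since everything is nonnegative the integral and the sum may be interchanged.
-/

open MeasureTheory Real

/-- The modified Bessel function of the first kind, defined by its power series
`I_ν(z) = Σ_{m ≥ 0} (z/2)^{2m+ν} / (m! · Γ(m+ν+1))`. -/
noncomputable def besselI (ν z : ℝ) : ℝ :=
  ∑' m : ℕ, (z / 2) ^ (2 * (m : ℝ) + ν) / ((m.factorial : ℝ) * Real.Gamma ((m : ℝ) + ν + 1))

/-- The transition density `q_y(b, c)` of the `2θ`-dimensional squared Bessel process. -/
noncomputable def besqDensity (θ y b c : ℝ) : ℝ :=
  (1 / (2 * y)) * (c / b) ^ ((θ - 1) / 2) * Real.exp (-(b + c) / (2 * y)) *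
    besselI (θ - 1) (Real.sqrt (b * c) / y)

open ProbabilityTheory Set

lemma integral_tsum_mul_eq_one {α : Type*} [MeasurableSpace α] {μ : Measure α}
    {f : ℕ → α → ℝ} {p : ℕ → ℝ} (hf_nonneg : ∀ m, 0 ≤ᵐ[μ] f m)
    (hf_one : ∀ m, ∫ x, f m x ∂μ = 1) (hp_nonneg : ∀ m, 0 ≤ p m) (hp_one : HasSum p 1) :
    ∫ x, ∑' m, p m * f m x ∂μ = 1 := by
  have hint (m : ℕ) : Integrable (fun x ↦ p m * f m x) μ :=
    (Integrable.of_integral_ne_zero (by simp [hf_one])).const_mul _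
  have hnorm (m : ℕ) : ∫ x, ‖p m * f m x‖ ∂μ = p m := by
    rw [integral_congr_ae ((hf_nonneg m).mono fun x hx ↦
        Real.norm_of_nonneg (mul_nonneg (hp_nonneg m) hx)),
      integral_const_mul, hf_one, mul_one]
  rw [← integral_tsum_of_summable_integral_norm hint (by simpa only [hnorm] using hp_one.summable)]
  simp only [integral_const_mul, hf_one, mul_one, hp_one.tsum_eq]

lemma setIntegral_Ioi_gammaPDFReal {a r : ℝ} (ha : 0 < a) (hr : 0 < r) :
    ∫ x in Ioi 0, gammaPDFReal a r x = 1 := by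
  rw [setIntegral_congr_fun measurableSet_Ioi fun x (hx : 0 < x) ↦ by
      rw [gammaPDFReal, if_pos hx.le, mul_assoc]]
  rw [integral_const_mul, integral_rpow_mul_exp_neg_mul_Ioi ha hr, div_rpow zero_le_one hr.le,
    one_rpow]
  field_simp [(Gamma_pos_of_pos ha).ne', (rpow_pos_of_pos hr a).ne']

lemma div_rpow_mul_sqrt_mul_rpow {b c : ℝ} (hb : 0 < b) (hc : 0 < c) (s t : ℝ) :
    (c / b) ^ s * √(b * c) ^ (2 * t) = b ^ (t - s) * c ^ (t + s) := by
  rw [sqrt_eq_rpow, ← rpow_mul (by positivity), show (1 / 2) * (2 * t) = t by ring,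
    mul_rpow hb.le hc.le, div_rpow hc.le hb.le, rpow_sub hb, rpow_add hc]
  field_simp [(rpow_pos_of_pos hb s).ne']

lemma besqDensity_eq_tsum {θ y b c : ℝ} (hy : 0 < y) (hb : 0 < b) (hc : 0 < c) :
    besqDensity θ y b c = ∑' m : ℕ,
      exp (-(b / (2 * y))) * (b / (2 * y)) ^ m / m.factorial *
        gammaPDFReal (m + θ) (1 / (2 * y)) c := by
  set r := 1 / (2 * y) with hr_def
  have hr : 0 < r := by positivity
  have hbr : b / (2 * y) = b * r := by rw [hr_def]; ring
  rw [besqDensity, besselI, ← tsum_mul_left, hbr]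
  refine tsum_congr fun m ↦ ?_
  set s := (θ - 1) / 2 with hs
  have hsqrt : √(b * c) / y / 2 = √(b * c) * r := by rw [hr_def]; field_simp
  have hexp : exp (-(b + c) / (2 * y)) = exp (-(b * r)) * exp (-(r * c)) := by
    rw [← exp_add, hr_def]; ring_nf
  have hr_pow : r ^ (2 * ((m : ℝ) + s)) = r ^ m * r ^ ((m : ℝ) + θ) / r := by
    rw [← rpow_natCast, ← rpow_add hr, ← rpow_sub_one hr.ne', hs]; ring_nf
  have hbc_pow := div_rpow_mul_sqrt_mul_rpow hb hc s (m + s)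
  rw [show (m : ℝ) + s - s = (m : ℕ) by ring, rpow_natCast,
    show (m : ℝ) + s + s = m + θ - 1 by ring] at hbc_pow
  rw [hsqrt, show 2 * (m : ℝ) + (θ - 1) = 2 * (m + s) by ring,
    show (m : ℝ) + (θ - 1) + 1 = m + θ by ring, mul_rpow (by positivity) hr.le, hexp, hr_pow,
    gammaPDFReal, if_pos hc.le, ← hr_def]
  calc _ = exp (-(b * r)) * exp (-(r * c)) * (r ^ m * r ^ ((m : ℝ) + θ))
        / (m.factorial * Gamma (m + θ)) * ((c / b) ^ s * √(b * c) ^ (2 * ((m : ℝ) + s))) := by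
          field_simp
    _ = _ := by rw [hbc_pow]; ring

/-- For `θ > 0` and `y, b > 0`, `c ↦ q_y(b, c)` is a probability density on `(0, ∞)`:
`∫₀^∞ q_y(b,c) dc = 1`. -/
theorem besqDensity_integral_eq_one (θ y b : ℝ) (hθ : 0 < θ) (hy : 0 < y) (hb : 0 < b) :
    ∫ c in Set.Ioi (0 : ℝ), besqDensity θ y b c = 1 := by
  have hr : 0 < 1 / (2 * y) := by positivity
  rw [setIntegral_congr_fun measurableSet_Ioi fun c hc ↦ besqDensity_eq_tsum hy hb hc]
  refine integral_tsum_mul_eq_one (fun m ↦ ae_of_all _ (gammaPDFReal_nonneg (by positivity) hr))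
    (fun m ↦ setIntegral_Ioi_gammaPDFReal (by positivity) hr) (fun m ↦ by positivity) ?_
  exact hasSum_one_poissonMeasure ⟨b / (2 * y), by positivity⟩
end
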